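/- arXiv:1509.05933 — 12 statements merged into one kernel-verified Lean document; each statement's English description precedes it below -/
import Mathlib

section
/- In a (75,32,10,16) strongly regular graph, if a 4-clique K has exactly 3 vertices with 0 neighbors in K, 20 vertices with 1 neighbor, 48 vertices with 2 neighbors and 0 vertices with 3 or 4 neighbors in K, then each of the three 0-neighbor vertices has all 32 of its neighbors among the 48 vertices with exactly 2 neighbors in K. -/
open Finset

/-- The number of neighbors of `x` inside the vertex set `K`. -/
def nbrs {V : Type*} [DecidableEq V] (G : SimpleGraph V) [DecidableRel G.Adj]
    (K : Finset V) (x : V) : ℕ :=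
  (K.filter (fun y => G.Adj x y)).card

/-- The number of vertices outside `K` with exactly `i` neighbors in `K`. -/
def bcount {V : Type*} [Fintype V] [DecidableEq V] (G : SimpleGraph V) [DecidableRel G.Adj]
    (K : Finset V) (i : ℕ) : ℕ :=
  ((univ \ K).filter (fun x => nbrs G K x = i)).card

/-- In a (75,32,10,16) SRG, if a 4-clique `K` has outside-degree distribution
(b₀,b₁,b₂,b₃,b₄) = (3,20,48,0,0), then every vertex with no neighbor in `K`
has all of its neighbors among the vertices with exactly 2 neighbors in `K`. -/
theorem stmt1 {V : Type*} [Fintype V] [DecidableEq V]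
    (G : SimpleGraph V) [DecidableRel G.Adj]
    (hG : G.IsSRGWith 75 32 10 16)
    (K : Finset V) (hK : G.IsNClique 4 K)
    (hb0 : bcount G K 0 = 3) (hb1 : bcount G K 1 = 20)
    (hb2 : bcount G K 2 = 48) (hb3 : bcount G K 3 = 0) (hb4 : bcount G K 4 = 0) :
    ∀ x ∉ K, nbrs G K x = 0 →
      G.neighborFinset x ⊆ (univ \ K).filter (fun y => nbrs G K y = 2) := by
  intro x hx hx0
  have hK4 : K.card = 4 := hK.2
  have hnadj : ∀ k ∈ K, ¬ G.Adj x k := by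
    intro k hk hadj
    have hmem : k ∈ K.filter (fun y => G.Adj x y) := mem_filter.2 ⟨hk, hadj⟩
    have : K.filter (fun y => G.Adj x y) = ∅ := card_eq_zero.1 hx0
    rw [this] at hmem
    exact absurd hmem (notMem_empty k)
  have hxK : ∀ y ∈ G.neighborFinset x, y ∉ K := by
    intro y hy hyK
    exact hnadj y hyK (by simpa using hy)
  have hle : ∀ y ∈ G.neighborFinset x, nbrs G K y ≤ 2 := by
    intro y hy
    have hyK := hxK y hy
    have h4 : nbrs G K y ≤ 4 := hK4 ▸ card_filter_le _ _
    have hne3 : nbrs G K y ≠ 3 := by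
      intro h
      have hmem : y ∈ (univ \ K).filter (fun z => nbrs G K z = 3) :=
        mem_filter.2 ⟨mem_sdiff.2 ⟨mem_univ y, hyK⟩, h⟩
      have : ((univ \ K).filter (fun z => nbrs G K z = 3)) = ∅ := card_eq_zero.1 hb3
      rw [this] at hmem; exact absurd hmem (notMem_empty y)
    have hne4 : nbrs G K y ≠ 4 := by
      intro h
      have hmem : y ∈ (univ \ K).filter (fun z => nbrs G K z = 4) :=
        mem_filter.2 ⟨mem_sdiff.2 ⟨mem_univ y, hyK⟩, h⟩
      have : ((univ \ K).filter (fun z => nbrs G K z = 4)) = ∅ := card_eq_zero.1 hb4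
      rw [this] at hmem; exact absurd hmem (notMem_empty y)
    omega
  have hcard : (G.neighborFinset x).card = 32 := by
    rw [G.card_neighborFinset_eq_degree]
    exact hG.regular x
  have hsum : ∑ y ∈ G.neighborFinset x, nbrs G K y = 64 := by
    have h1 : ∑ y ∈ G.neighborFinset x, nbrs G K y
        = ∑ k ∈ K, ((G.neighborFinset x).filter (fun y => G.Adj y k)).card := by
      simp only [nbrs, card_filter]
      rw [Finset.sum_comm]
    rw [h1]
    have h2 : ∀ k ∈ K, ((G.neighborFinset x).filter (fun y => G.Adj y k)).card = 16 := by
      intro k hk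
      have hne : x ≠ k := fun h => hx (h ▸ hk)
      have hcc := hG.of_not_adj hne (hnadj k hk)
      rw [← hcc, ← Set.toFinset_card]
      congr 1
      ext y
      simp [SimpleGraph.commonNeighbors, SimpleGraph.mem_neighborFinset,
        SimpleGraph.adj_comm]
      exact (@Set.mem_toFinset _ (G.neighborSet x ∩ G.neighborSet k) (Subtype.fintype _) y).symm
    rw [Finset.sum_congr rfl h2, sum_const, hK4]; rfl
  intro y hy
  refine mem_filter.2 ⟨mem_sdiff.2 ⟨mem_univ y, hxK y hy⟩, ?_⟩
  by_contra hne2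
  have hlt : nbrs G K y < 2 := lt_of_le_of_ne (hle y hy) hne2
  have hstrict : ∑ z ∈ G.neighborFinset x, nbrs G K z
      < ∑ _z ∈ G.neighborFinset x, 2 :=
    Finset.sum_lt_sum (fun i hi => hle i hi) ⟨y, hy, hlt⟩
  rw [sum_const, hcard, hsum, smul_eq_mul] at hstrict
  omega
end

section
/- Let X be a strongly regular graph with parameters (v,k,λ,μ), and let H be an induced subgraph of X on m vertices with d_i vertices of degree i (within H). For j = 0,...,m let b_j be the number of vertices of X outside H with exactly j neighbors in H. Then: (1) Σ_j b_j = v - m; (2) Σ_j j·b_j = m·k - Σ_i i·d_i; (3) Σ_j C(j,2)·b_j = C(m,2)·μ - Σ_i C(i,2)·d_i + (1/2)(λ-μ)·Σ_i i·d_i. -/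
/-!
Sort the vertices by their number `degIn H x` of neighbours in `H`. Then (1) counts the vertices
outside `H`, (2) counts the edges between `H` and its complement (each vertex of `H` has `k`
neighbours in all), and (3) counts the triples `(x, y, z)` with `y ≠ z` in `H` and `x` adjacent
to both: grouped by `(y, z)` instead, each pair contributes `λ` or `μ` common neighbours, and the
number of adjacent ordered pairs in `H` is the degree sum of `H`.
-/

open Finset

namespace Finset

variable {ι κ R : Type*}

theorem sum_mul_card_fiberwise [DecidableEq κ] [NonAssocSemiring R] {s : Finset ι}
    {t : Finset κ} {g : ι → κ} (h : ∀ i ∈ s, g i ∈ t) (f : κ → R) :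
    ∑ j ∈ t, f j * #{i ∈ s | g i = j} = ∑ i ∈ s, f (g i) := by
  rw [← sum_fiberwise_of_maps_to' h f]
  exact sum_congr rfl fun j _ => by rw [sum_const, nsmul_eq_mul']

theorem card_offDiag_eq_two_mul_choose_two [DecidableEq ι] (s : Finset ι) :
    #s.offDiag = 2 * (#s).choose 2 := by
  rw [offDiag_card, Nat.choose_two_right, Nat.two_mul_div_two_of_even (Nat.even_mul_pred_self _),
    Nat.mul_sub_one]

end Finset

namespace SimpleGraph

variable {V : Type*} (G : SimpleGraph V) [DecidableRel G.Adj] (s : Finset V)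

def degIn (x : V) : ℕ := #{y ∈ s | G.Adj x y}

variable {G s}

theorem degIn_le_card (x : V) : G.degIn s x ≤ #s :=
  card_filter_le _ _

theorem degIn_lt_card [DecidableEq V] {x : V} (hx : x ∈ s) : G.degIn s x < #s := by
  refine card_lt_card ⟨filter_subset _ _, fun hs => ?_⟩
  simpa using hs hx

theorem IsRegularOfDegree.sum_degIn [Fintype V] {k : ℕ} (hG : G.IsRegularOfDegree k) :
    ∑ x, G.degIn s x = #s * k := by
  calc ∑ x, G.degIn s x = ∑ y ∈ s, #{x | G.Adj x y} :=
        sum_card_bipartiteAbove_eq_sum_card_bipartiteBelow _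
    _ = ∑ y ∈ s, k := sum_congr rfl fun y _ => by
        rw [← hG y, ← card_neighborFinset_eq_degree, neighborFinset_eq_filter]
        simp_rw [G.adj_comm]
    _ = #s * k := by rw [sum_const, smul_eq_mul]

theorem two_mul_sum_choose_two_degIn [Fintype V] [DecidableEq V] :
    2 * ∑ x, (G.degIn s x).choose 2
      = ∑ p ∈ s.offDiag, Fintype.card (G.commonNeighbors p.1 p.2) := by
  have hpairs (x : V) : {y ∈ s | G.Adj x y}.offDiag
      = {p ∈ s.offDiag | G.Adj x p.1 ∧ G.Adj x p.2} := by
    ext p; simp only [mem_offDiag, mem_filter]; tauto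
  calc 2 * ∑ x, (G.degIn s x).choose 2 = ∑ x, #{p ∈ s.offDiag | G.Adj x p.1 ∧ G.Adj x p.2} := by
        simp_rw [mul_sum, degIn, ← card_offDiag_eq_two_mul_choose_two, hpairs]
    _ = ∑ p ∈ s.offDiag, #{x | G.Adj x p.1 ∧ G.Adj x p.2} :=
        sum_card_bipartiteAbove_eq_sum_card_bipartiteBelow _
    _ = _ := sum_congr rfl fun p _ => by
        rw [Fintype.card_subtype]
        simp_rw [mem_commonNeighbors, G.adj_comm]

theorem card_filter_adj_offDiag [DecidableEq V] :
    #{p ∈ s.offDiag | G.Adj p.1 p.2} = ∑ x ∈ s, G.degIn s x := by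
  have : {p ∈ s.offDiag | G.Adj p.1 p.2} = {p ∈ s ×ˢ s | G.Adj p.1 p.2} := by
    ext p
    simp only [mem_filter, mem_offDiag, mem_product]
    exact ⟨fun h => ⟨⟨h.1.1, h.1.2.1⟩, h.2⟩, fun h => ⟨⟨h.1.1, h.1.2, h.2.ne⟩, h.2⟩⟩
  rw [this, card_filter, sum_product]
  simp_rw [← card_filter]
  rfl

theorem IsSRGWith.two_mul_sum_choose_two_degIn [Fintype V] [DecidableEq V] {n k ℓ μ : ℕ}
    (hG : G.IsSRGWith n k ℓ μ) :
    2 * ∑ x, (G.degIn s x).choose 2 + μ * ∑ x ∈ s, G.degIn s x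
      = ℓ * ∑ x ∈ s, G.degIn s x + μ * (2 * (#s).choose 2) := by
  have hcommon : ∀ p ∈ s.offDiag,
      Fintype.card (G.commonNeighbors p.1 p.2) = if G.Adj p.1 p.2 then ℓ else μ := by
    intro p hp
    split_ifs with hadj
    · exact hG.of_adj _ _ hadj
    · exact hG.of_not_adj (mem_offDiag.mp hp).2.2 hadj
  have hsplit := card_filter_add_card_filter_not (s := s.offDiag) (fun p => G.Adj p.1 p.2)
  rw [G.two_mul_sum_choose_two_degIn, sum_congr rfl hcommon, sum_ite, sum_const, sum_const,
    smul_eq_mul, smul_eq_mul, ← card_offDiag_eq_two_mul_choose_two, ← hsplit,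
    card_filter_adj_offDiag]
  ring

end SimpleGraph

/-- Counting identities relating the degree distribution inside an induced subgraph `H`
of a strongly regular graph and the distribution of outside vertices by their number
of neighbors in `H`. -/
theorem stmt2 {V : Type*} [Fintype V] [DecidableEq V]
    (G : SimpleGraph V) [DecidableRel G.Adj]
    (n k l mu : ℕ) (hG : G.IsSRGWith n k l mu)
    (H : Finset V) (d b : ℕ → ℕ)
    (hd : ∀ i, d i = (H.filter (fun x => (H.filter (fun y => G.Adj x y)).card = i)).card)
    (hb : ∀ j, b j = ((univ \ H).filter (fun x => (H.filter (fun y => G.Adj x y)).card = j)).card) :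
    (∑ j ∈ Finset.range (H.card + 1), b j = n - H.card) ∧
    (∑ j ∈ Finset.range (H.card + 1), j * b j
        = H.card * k - ∑ i ∈ Finset.range H.card, i * d i) ∧
    (∑ j ∈ Finset.range (H.card + 1), (j.choose 2 : ℚ) * b j
        = (H.card.choose 2 : ℚ) * mu - ∑ i ∈ Finset.range H.card, (i.choose 2 : ℚ) * d i
          + ((l : ℚ) - mu) / 2 * ∑ i ∈ Finset.range H.card, (i : ℚ) * d i) := by
  have hout : ∀ x ∈ univ \ H, G.degIn H x ∈ range (#H + 1) := fun x _ =>
    mem_range_succ_iff.mpr (SimpleGraph.degIn_le_card x)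
  have hin : ∀ x ∈ H, G.degIn H x ∈ range #H := fun x hx =>
    mem_range.mpr (SimpleGraph.degIn_lt_card hx)
  have hb' : ∀ j, b j = #{x ∈ univ \ H | G.degIn H x = j} := hb
  have hd' : ∀ i, d i = #{x ∈ H | G.degIn H x = i} := hd
  simp only [hb', hd']
  refine ⟨?_, ?_, ?_⟩
  · rw [← card_eq_sum_card_fiberwise hout, card_sdiff_of_subset (subset_univ H), card_univ, hG.card]
  · have hsplit := sum_sdiff (f := G.degIn H) (subset_univ H)
    rw [hG.regular.sum_degIn] at hsplit
    have hout' := sum_mul_card_fiberwise (R := ℕ) hout (fun j => j)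
    have hin' := sum_mul_card_fiberwise (R := ℕ) hin (fun i => i)
    simp only [Nat.cast_id] at hout' hin'
    omega
  · simp only [sum_mul_card_fiberwise hout, sum_mul_card_fiberwise hin]
    have hkey := congrArg (Nat.cast : ℕ → ℚ) (hG.two_mul_sum_choose_two_degIn (s := H))
    have hsplit := sum_sdiff (f := fun x => ((G.degIn H x).choose 2 : ℚ)) (subset_univ H)
    push_cast at hkey
    linear_combination hkey / 2 + hsplit
end

section
/- In a strongly regular graph with parameters (75,32,10,16), every vertex not contained in a given 5-clique has exactly 2 neighbors in that 5-clique. -/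
open Finset

/-!
For each of the 70 vertices `x` outside the clique `K` let `d x` be its number of neighbours
in `K`. Each clique vertex has `32 - 4 = 28` neighbours outside `K` and each pair of clique vertices
has `10 - 3 = 7` common neighbours outside `K`, so `∑ d = 5 · 28 = 140` and
`∑ d² = 140 + 20 · 7 = 280`. Hence `d` has mean `2` and second moment `4`, i.e. variance `0`,
and so `d x = 2` for every `x ∉ K`.
-/

theorem Finset.eq_of_sum_eq_of_sum_sq_eq {ι R : Type*} [CommRing R] [LinearOrder R]
    [IsStrictOrderedRing R] {S : Finset ι} {f : ι → R} {a : R}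
    (h₁ : ∑ x ∈ S, f x = #S * a) (h₂ : ∑ x ∈ S, f x ^ 2 = #S * a ^ 2) :
    ∀ x ∈ S, f x = a := by
  have hvar : ∑ x ∈ S, (f x - a) ^ 2 = 0 := by
    simp only [sub_sq, sum_add_distrib, sum_sub_distrib, ← sum_mul, ← mul_sum, sum_const,
      nsmul_eq_mul, h₁, h₂]
    ring
  intro x hx
  exact sub_eq_zero.mp <| pow_eq_zero_iff two_ne_zero |>.mp <|
    (sum_eq_zero_iff_of_nonneg fun _ _ => sq_nonneg _).mp hvar x hx

theorem Finset.card_filter_sdiff_add_card_filter {α : Type*} [Fintype α] [DecidableEq α]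
    (K : Finset α) (p : α → Prop) [DecidablePred p] :
    #{x ∈ univ \ K | p x} + #{x ∈ K | p x} = #{x | p x} := by
  rw [← card_union_of_disjoint (disjoint_filter_filter sdiff_disjoint), ← filter_union,
    sdiff_union_of_subset (subset_univ K)]

namespace SimpleGraph

variable {V : Type*} [DecidableEq V] (G : SimpleGraph V) [DecidableRel G.Adj]

section DoubleCounting

variable (K S : Finset V)

theorem sum_nbrs_eq_sum_card_filter_adj :
    ∑ x ∈ S, nbrs G K x = ∑ y ∈ K, #{x ∈ S | G.Adj x y} := by
  simp only [nbrs, card_filter]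
  exact sum_comm

theorem sum_nbrs_sq_eq_sum_card_filter_adj_adj :
    ∑ x ∈ S, nbrs G K x ^ 2 = ∑ y ∈ K, ∑ z ∈ K, #{x ∈ S | G.Adj x y ∧ G.Adj x z} := by
  simp only [nbrs, sq, card_filter, sum_mul_sum, ite_zero_mul_ite_zero, one_mul]
  rw [sum_comm]
  exact sum_congr rfl fun _ _ => sum_comm

end DoubleCounting

variable [Fintype V] {K : Finset V} (hK : G.IsClique (K : Set V))
include hK

theorem card_filter_adj_compl_clique {k : ℕ} (hreg : G.IsRegularOfDegree k) {y : V}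
    (hy : y ∈ K) : #{x ∈ univ \ K | G.Adj x y} + (#K - 1) = k := by
  have hin : ({x ∈ K | G.Adj x y} : Finset V) = K.erase y := by
    ext x
    simp only [mem_filter, mem_erase]
    exact ⟨fun ⟨hx, hxy⟩ => ⟨hxy.ne, hx⟩, fun ⟨hxy, hx⟩ => ⟨hx, hK hx hy hxy⟩⟩
  have hall : ({x | G.Adj x y} : Finset V) = G.neighborFinset y := by
    ext x
    simp [G.adj_comm]
  rw [← card_erase_of_mem hy, ← hin, card_filter_sdiff_add_card_filter, hall,
    card_neighborFinset_eq_degree, hreg y]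

theorem card_filter_adj_adj_compl_clique {n k ℓ μ : ℕ} (hG : G.IsSRGWith n k ℓ μ) {y z : V}
    (hy : y ∈ K) (hz : z ∈ K) (hyz : y ≠ z) :
    #{x ∈ univ \ K | G.Adj x y ∧ G.Adj x z} + (#K - 2) = ℓ := by
  have hin : ({x ∈ K | G.Adj x y ∧ G.Adj x z} : Finset V) = (K.erase y).erase z := by
    ext x
    simp only [mem_filter, mem_erase]
    exact ⟨fun ⟨hx, hxy, hxz⟩ => ⟨hxz.ne, hxy.ne, hx⟩,
      fun ⟨hxz, hxy, hx⟩ => ⟨hx, hK hx hy hxy, hK hx hz hxz⟩⟩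
  have hall : ({x | G.Adj x y ∧ G.Adj x z} : Finset V) = (G.commonNeighbors y z).toFinset := by
    ext x
    simp [mem_commonNeighbors, G.adj_comm]
  have hcard : #((K.erase y).erase z) = #K - 2 := by
    rw [card_erase_of_mem (mem_erase.mpr ⟨hyz.symm, hz⟩), card_erase_of_mem hy, Nat.sub_sub]
  rw [← hcard, ← hin, card_filter_sdiff_add_card_filter, hall, Set.toFinset_card,
    hG.of_adj y z (hK hy hz hyz)]

theorem sum_nbrs_compl_clique {k : ℕ} (hreg : G.IsRegularOfDegree k) :
    (∑ x ∈ univ \ K, nbrs G K x : ℤ) = #K * (k - (#K - 1)) := by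
  have hcount : ∀ y ∈ K, (#{x ∈ univ \ K | G.Adj x y} : ℤ) = k - (#K - 1) := fun y hy => by
    have hcount := G.card_filter_adj_compl_clique hK hreg hy
    have hpos := card_pos.mpr ⟨y, hy⟩
    omega
  rw [← Nat.cast_sum, sum_nbrs_eq_sum_card_filter_adj, Nat.cast_sum, sum_congr rfl hcount,
    sum_const, nsmul_eq_mul]

theorem sum_nbrs_sq_compl_clique {n k ℓ μ : ℕ} (hG : G.IsSRGWith n k ℓ μ) :
    (∑ x ∈ univ \ K, nbrs G K x ^ 2 : ℤ) =
      #K * (k - (#K - 1)) + #K * (#K - 1) * (ℓ - (#K - 2)) := by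
  have hcount : ∀ y ∈ K, ∀ z ∈ K.erase y,
      (#{x ∈ univ \ K | G.Adj x y ∧ G.Adj x z} : ℤ) = ℓ - (#K - 2) := fun y hy z hz => by
    obtain ⟨hzy, hz⟩ := mem_erase.mp hz
    have hcount := G.card_filter_adj_adj_compl_clique hK hG hy hz hzy.symm
    have htwo := one_lt_card.mpr ⟨y, hy, z, hz, hzy.symm⟩
    omega
  have hrow : ∀ y ∈ K, ∑ z ∈ K, (#{x ∈ univ \ K | G.Adj x y ∧ G.Adj x z} : ℤ) =
      (k - (#K - 1)) + (#K - 1) * (ℓ - (#K - 2)) := fun y hy => by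
    have hdiag := G.card_filter_adj_compl_clique hK hG.regular hy
    have hpos := card_pos.mpr ⟨y, hy⟩
    rw [← add_sum_erase K _ hy, sum_congr rfl (hcount y hy), sum_const, nsmul_eq_mul,
      card_erase_of_mem hy, Nat.cast_pred hpos]
    simp only [and_self]
    omega
  have hsum := congrArg (Nat.cast (R := ℤ)) (sum_nbrs_sq_eq_sum_card_filter_adj_adj G K (univ \ K))
  push_cast at hsum
  rw [hsum, sum_congr rfl hrow, sum_const, nsmul_eq_mul]
  ring

end SimpleGraph

/-- In a (75,32,10,16) SRG, every vertex not in a given 5-clique has exactly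
2 neighbors in that 5-clique. -/
theorem stmt3 {V : Type*} [Fintype V] [DecidableEq V]
    (G : SimpleGraph V) [DecidableRel G.Adj]
    (hG : G.IsSRGWith 75 32 10 16)
    (K : Finset V) (hK : G.IsNClique 5 K) :
    ∀ x ∉ K, nbrs G K x = 2 := by
  have hK5 : #K = 5 := hK.card_eq
  have hout : #(univ \ K) = 70 := by
    rw [card_sdiff_of_subset (subset_univ K), card_univ, hG.card, hK5]
  have hsum := G.sum_nbrs_compl_clique hK.isClique hG.regular
  have hsum_sq := G.sum_nbrs_sq_compl_clique hK.isClique hG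
  rw [hK5] at hsum hsum_sq
  intro x hx
  have hmean : ∀ x ∈ univ \ K, (nbrs G K x : ℤ) = 2 :=
    eq_of_sum_eq_of_sum_sq_eq (by rw [hsum, hout]; norm_num) (by rw [hsum_sq, hout]; norm_num)
  exact_mod_cast hmean x (mem_sdiff.mpr ⟨mem_univ x, hx⟩)
end

section
/- Let X be a (75,32,10,16) strongly regular graph containing a 4-clique K such that the vertices outside K split as (b_0,b_1,b_2,b_3,b_4)=(3,20,48,0,0) by number of neighbors in K. Let x1,x2,x3 be the three vertices with no neighbor in K. Then N(x1) ∩ N(x2) ∩ N(x3) = ∅, and consequently every vertex with exactly 2 neighbors in K is adjacent to exactly two of x1,x2,x3. -/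
open Finset

/-!
The `xi` are pairwise non-adjacent, so their neighbourhoods have 32 vertices each, meet pairwise
in 16 vertices, and all lie in the 48-set `S` of vertices with two neighbours in `K`. By
inclusion–exclusion `96 - 48 + t ≤ 48`, where `t` is the size of the triple intersection, so
`t = 0`. Thus every vertex of `S` sees at most two of the `xi`; on the other hand, counting edges
between `S` and `{x1, x2, x3}` gives `3 * 32 = 2 * 48` of them, so every vertex of `S` sees
exactly two.
-/

theorem Finset.card_union_union_add_card_inter_add_card_inter_add_card_inter
    {α : Type*} [DecidableEq α] (s t u : Finset α) :
    #(s ∪ t ∪ u) + #(s ∩ t) + #(s ∩ u) + #(t ∩ u) = #s + #t + #u + #(s ∩ t ∩ u) := by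
  have h₁ := card_union_add_card_inter s t
  have h₂ := card_union_add_card_inter (s ∪ t) u
  have h₃ := card_union_add_card_inter (s ∩ u) (t ∩ u)
  rw [union_inter_distrib_right] at h₂
  rw [← inter_inter_distrib_right] at h₃
  omega

theorem Finset.card_filter_insert_insert_singleton_le_two {α : Type*} [DecidableEq α]
    {p : α → Prop} [DecidablePred p] {a b c : α} (h : ¬ (p a ∧ p b ∧ p c)) :
    #(({a, b, c} : Finset α).filter p) ≤ 2 := by
  have hlt : #(({a, b, c} : Finset α).filter p) < #({a, b, c} : Finset α) :=
    card_lt_card (filter_ssubset.2 (by simp only [mem_insert, mem_singleton]; grind))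
  have := card_le_three (a := a) (b := b) (c := c)
  omega

namespace SimpleGraph
variable {V : Type*} [Fintype V] {G : SimpleGraph V} [DecidableRel G.Adj]
  {n k ℓ μ : ℕ}

theorem IsRegularOfDegree.sum_card_filter_adj_eq (hG : G.IsRegularOfDegree k) {S T : Finset V}
    (hT : ∀ z ∈ T, G.neighborFinset z ⊆ S) :
    ∑ y ∈ S, #{z ∈ T | G.Adj y z} = #T * k := by
  calc ∑ y ∈ S, #{z ∈ T | G.Adj y z} = ∑ z ∈ T, #{y ∈ S | G.Adj y z} :=
        sum_card_bipartiteAbove_eq_sum_card_bipartiteBelow G.Adj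
    _ = ∑ z ∈ T, k := sum_congr rfl fun z hz => by
        rw [← hG.degree_eq z, ← card_neighborFinset_eq_degree]
        congr 1
        ext y
        simp only [mem_filter, mem_neighborFinset]
        exact ⟨fun h => h.2.symm, fun h => ⟨hT z hz ((mem_neighborFinset _ _ _).2 h), h.symm⟩⟩
    _ = #T * k := by rw [sum_const, smul_eq_mul]

variable [DecidableEq V]

theorem IsSRGWith.card_neighborFinset_inter_of_not_adj (hG : G.IsSRGWith n k ℓ μ) {v w : V}
    (hvw : v ≠ w) (hadj : ¬ G.Adj v w) : #(G.neighborFinset v ∩ G.neighborFinset w) = μ := by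
  rw [← hG.of_not_adj hvw hadj, ← Set.toFinset_card]
  congr 1
  ext
  simp only [Set.mem_toFinset]
  simp [commonNeighbors]

theorem IsSRGWith.card_inter_inter_neighborFinset_add_le (hG : G.IsSRGWith n k ℓ μ)
    {a b c : V} {S : Finset V} (hab : a ≠ b) (hac : a ≠ c) (hbc : b ≠ c)
    (hab' : ¬ G.Adj a b) (hac' : ¬ G.Adj a c) (hbc' : ¬ G.Adj b c)
    (haS : G.neighborFinset a ⊆ S) (hbS : G.neighborFinset b ⊆ S)
    (hcS : G.neighborFinset c ⊆ S) :
    #(G.neighborFinset a ∩ G.neighborFinset b ∩ G.neighborFinset c) + 3 * k ≤ #S + 3 * μ := by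
  have hunion := card_le_card (union_subset (union_subset haS hbS) hcS)
  have := card_union_union_add_card_inter_add_card_inter_add_card_inter
    (G.neighborFinset a) (G.neighborFinset b) (G.neighborFinset c)
  rw [hG.card_neighborFinset_inter_of_not_adj hab hab',
    hG.card_neighborFinset_inter_of_not_adj hac hac',
    hG.card_neighborFinset_inter_of_not_adj hbc hbc'] at this
  simp only [card_neighborFinset_eq_degree, hG.regular.degree_eq] at this
  omega

end SimpleGraph

theorem stmt5_general {V : Type*} [Fintype V] [DecidableEq V]
    (G : SimpleGraph V) [DecidableRel G.Adj]
    (hG : G.IsSRGWith 75 32 10 16)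
    (K : Finset V)
    (hb2 : bcount G K 2 = 48)
    (x1 x2 x3 : V) (h12 : x1 ≠ x2) (h13 : x1 ≠ x3) (h23 : x2 ≠ x3)
    (hX0 : (univ \ K).filter (fun x => nbrs G K x = 0) = {x1, x2, x3})
    (hN : ∀ i ∈ ({x1, x2, x3} : Finset V),
      G.neighborFinset i ⊆ (univ \ K).filter (fun y => nbrs G K y = 2)) :
    (G.neighborFinset x1 ∩ G.neighborFinset x2 ∩ G.neighborFinset x3 = ∅) ∧
    ∀ y ∈ (univ \ K).filter (fun y => nbrs G K y = 2),
      (({x1, x2, x3} : Finset V).filter (fun z => G.Adj y z)).card = 2 := by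
  set S := (univ \ K).filter (fun y => nbrs G K y = 2)
  set T : Finset V := {x1, x2, x3}
  have hS : #S = 48 := hb2
  have hT : #T = 3 := card_eq_three.2 ⟨x1, x2, x3, h12, h13, h23, rfl⟩
  have hx1 : x1 ∈ T := by simp [T]
  have hx2 : x2 ∈ T := by simp [T]
  have hx3 : x3 ∈ T := by simp [T]
  -- a neighbour of some `xi` has two neighbours in `K`, while each `xi` has none
  have hindep : ∀ z ∈ T, ∀ w ∈ T, ¬ G.Adj z w := fun z hz w hw hzw => by
    have h2 := (mem_filter.1 (hN z hz ((G.mem_neighborFinset _ _).2 hzw))).2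
    have h0 := (mem_filter.1 (hX0 ▸ hw : w ∈ (univ \ K).filter _)).2
    omega
  have hempty : G.neighborFinset x1 ∩ G.neighborFinset x2 ∩ G.neighborFinset x3 = ∅ := by
    have := hG.card_inter_inter_neighborFinset_add_le h12 h13 h23
      (hindep _ hx1 _ hx2) (hindep _ hx1 _ hx3) (hindep _ hx2 _ hx3)
      (hN x1 hx1) (hN x2 hx2) (hN x3 hx3)
    exact card_eq_zero.1 (by omega)
  refine ⟨hempty, ?_⟩
  have hle : ∀ y ∈ S, #{z ∈ T | G.Adj y z} ≤ 2 := fun y _ =>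
    card_filter_insert_insert_singleton_le_two fun ⟨h1, h2, h3⟩ => by
      have : y ∈ G.neighborFinset x1 ∩ G.neighborFinset x2 ∩ G.neighborFinset x3 := by
        simp [h1.symm, h2.symm, h3.symm]
      simp [hempty] at this
  have hsum : ∑ y ∈ S, #{z ∈ T | G.Adj y z} = ∑ y ∈ S, 2 := by
    rw [hG.regular.sum_card_filter_adj_eq hN, sum_const, smul_eq_mul, hT, hS]
  exact (sum_eq_sum_iff_of_le hle).1 hsum

/-- Case (3,20,48,0,0): the three vertices `x1,x2,x3` with no neighbor in the
4-clique `K` (all of whose neighbors lie among the 2-neighbor vertices) have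
no common neighbor, and consequently every vertex with exactly 2 neighbors in
`K` is adjacent to exactly two of `x1,x2,x3`. -/
theorem stmt5 {V : Type*} [Fintype V] [DecidableEq V]
    (G : SimpleGraph V) [DecidableRel G.Adj]
    (hG : G.IsSRGWith 75 32 10 16)
    (K : Finset V) (hK : G.IsNClique 4 K)
    (hb0 : bcount G K 0 = 3) (hb1 : bcount G K 1 = 20)
    (hb2 : bcount G K 2 = 48) (hb3 : bcount G K 3 = 0) (hb4 : bcount G K 4 = 0)
    (x1 x2 x3 : V) (h12 : x1 ≠ x2) (h13 : x1 ≠ x3) (h23 : x2 ≠ x3)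
    (hX0 : (univ \ K).filter (fun x => nbrs G K x = 0) = {x1, x2, x3})
    (hN : ∀ i ∈ ({x1, x2, x3} : Finset V),
      G.neighborFinset i ⊆ (univ \ K).filter (fun y => nbrs G K y = 2)) :
    (G.neighborFinset x1 ∩ G.neighborFinset x2 ∩ G.neighborFinset x3 = ∅) ∧
    ∀ y ∈ (univ \ K).filter (fun y => nbrs G K y = 2),
      (({x1, x2, x3} : Finset V).filter (fun z => G.Adj y z)).card = 2 :=
  stmt5_general G hG K hb2 x1 x2 x3 h12 h13 h23 hX0 hN
end

section
/- Let X be a (75,32,10,16) strongly regular graph with a 4-clique K whose outside-degree distribution is (b_0,b_1,b_2,b_3)=(2,23,45,1) with b_4=0, and let x0, x1 be the two vertices with no neighbor in K. Then x0 and x1 are not adjacent. -/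
/-!
Count the edges between the 32 neighbours of `x0` and the clique `K` in two ways. Since `x0` has
no neighbour in `K`, each of the four clique vertices shares `μ = 16` neighbours with `x0`, so
there are `64` such edges. If `x0 ~ x1`, the neighbour `x1` contributes none, and the other `31`
neighbours contribute at most `2` each, except for the single vertex with three neighbours in `K`:
at most `63` edges.
-/

open Finset

namespace SimpleGraph

variable {V : Type*} [DecidableEq V] {G : SimpleGraph V} [DecidableRel G.Adj]

theorem nbrs_eq_zero_iff_disjoint [Fintype V] {K : Finset V} {x : V} :
    nbrs G K x = 0 ↔ Disjoint (G.neighborFinset x) K := by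
  rw [nbrs, card_filter_eq_zero_iff, Finset.disjoint_right]
  simp only [mem_neighborFinset]

theorem card_filter_nbrs_le_bcount [Fintype V] {K T : Finset V} (hT : Disjoint T K) (i : ℕ) :
    #(T.filter fun y => nbrs G K y = i) ≤ bcount G K i := by
  refine card_le_card (filter_subset_filter _ fun y hy => ?_)
  exact mem_sdiff.2 ⟨mem_univ y, Finset.disjoint_left.1 hT hy⟩

theorem sum_nbrs_le_of_card_le_four [Fintype V] {K T : Finset V} (hK : #K ≤ 4)
    (hT : Disjoint T K) :
    ∑ y ∈ T, nbrs G K y ≤ 2 * #T + bcount G K 3 + 2 * bcount G K 4 := by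
  have hpoint : ∀ y ∈ T, nbrs G K y ≤
      2 + (if nbrs G K y = 3 then 1 else 0) + 2 * (if nbrs G K y = 4 then 1 else 0) := by
    intro y _
    have : nbrs G K y ≤ 4 := (card_filter_le _ _).trans hK
    split_ifs <;> omega
  calc ∑ y ∈ T, nbrs G K y
      ≤ ∑ y ∈ T, (2 + (if nbrs G K y = 3 then 1 else 0) +
          2 * (if nbrs G K y = 4 then 1 else 0)) := sum_le_sum hpoint
    _ = 2 * #T + #(T.filter fun y => nbrs G K y = 3) +
          2 * #(T.filter fun y => nbrs G K y = 4) := by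
      simp only [sum_add_distrib, ← mul_sum, sum_const, smul_eq_mul, ← card_filter]
      ring
    _ ≤ 2 * #T + bcount G K 3 + 2 * bcount G K 4 := by
      gcongr <;> exact card_filter_nbrs_le_bcount hT _

theorem IsSRGWith.sum_nbrs_neighborFinset [Fintype V] {n k ℓ μ : ℕ} (hG : G.IsSRGWith n k ℓ μ)
    {K : Finset V} {x : V} (hxK : x ∉ K) (hx : nbrs G K x = 0) :
    ∑ y ∈ G.neighborFinset x, nbrs G K y = #K * μ := by
  have hcommon : ∀ z ∈ K, #((G.neighborFinset x).filter fun y => G.Adj y z) = μ := by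
    intro z hz
    have hxz : x ≠ z := ne_of_mem_of_not_mem hz hxK |>.symm
    have hnadj : ¬ G.Adj x z := fun h =>
      Finset.disjoint_left.1 (nbrs_eq_zero_iff_disjoint.1 hx) ((G.mem_neighborFinset x z).2 h) hz
    rw [← hG.of_not_adj hxz hnadj, ← Set.toFinset_card]
    congr 1
    ext y
    simp [mem_commonNeighbors, G.adj_comm y z]
  calc ∑ y ∈ G.neighborFinset x, nbrs G K y
      = ∑ z ∈ K, #((G.neighborFinset x).filter fun y => G.Adj y z) := by
        simp only [nbrs, card_filter]
        exact sum_comm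
    _ = #K * μ := by rw [sum_congr rfl hcommon, sum_const, smul_eq_mul]

end SimpleGraph

theorem stmt6_general {V : Type*} [Fintype V] [DecidableEq V]
    (G : SimpleGraph V) [DecidableRel G.Adj]
    (hG : G.IsSRGWith 75 32 10 16)
    (K : Finset V) (hK : G.IsNClique 4 K)
    (hb3 : bcount G K 3 = 1) (hb4 : bcount G K 4 = 0)
    (x0 x1 : V)
    (hx0K : x0 ∉ K) (hx0 : nbrs G K x0 = 0)
    (hx1 : nbrs G K x1 = 0) :
    ¬ G.Adj x0 x1 := by
  intro hadj
  have hx1N : x1 ∈ G.neighborFinset x0 := (G.mem_neighborFinset x0 x1).2 hadj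
  have hcount := hG.sum_nbrs_neighborFinset hx0K hx0
  rw [← add_sum_erase _ _ hx1N, hx1, hK.card_eq] at hcount
  have hbound := SimpleGraph.sum_nbrs_le_of_card_le_four (G := G) hK.card_eq.le
    ((SimpleGraph.nbrs_eq_zero_iff_disjoint.1 hx0).mono_left (erase_subset x1 _))
  rw [card_erase_of_mem hx1N, G.card_neighborFinset_eq_degree, hG.regular x0, hb3, hb4] at hbound
  omega

/-- Case (2,23,45,1): the two vertices with no neighbor in the 4-clique `K`
are not adjacent. -/
theorem stmt6 {V : Type*} [Fintype V] [DecidableEq V]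
    (G : SimpleGraph V) [DecidableRel G.Adj]
    (hG : G.IsSRGWith 75 32 10 16)
    (K : Finset V) (hK : G.IsNClique 4 K)
    (hb0 : bcount G K 0 = 2) (hb1 : bcount G K 1 = 23)
    (hb2 : bcount G K 2 = 45) (hb3 : bcount G K 3 = 1) (hb4 : bcount G K 4 = 0)
    (x0 x1 : V) (hne : x0 ≠ x1)
    (hx0K : x0 ∉ K) (hx0 : nbrs G K x0 = 0)
    (hx1K : x1 ∉ K) (hx1 : nbrs G K x1 = 0) :
    ¬ G.Adj x0 x1 :=
  stmt6_general G hG K hK hb3 hb4 x0 x1 hx0K hx0 hx1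
end

section
/- Let X be a (75,32,10,16) strongly regular graph with a 4-clique K whose outside-degree distribution is (b_0,b_1,b_2,b_3)=(0,29,39,3) with b_4=0, and let x0,x1,x2 be the three (pairwise non-adjacent) vertices with 3 neighbors in K, each having exactly 21 neighbors among the 29 vertices with 1 neighbor in K. Then any two of x0,x1,x2 have at most one common neighbor among the vertices with exactly 2 neighbors in K. -/
/-!
Two non-adjacent vertices `a`, `b` of the strongly regular graph have exactly `μ = 16` common
neighbours, and these are split between the clique `K`, the vertices with one neighbour in `K`
and those with two. Having 3 neighbours each in the 4-clique, `a` and `b` share at least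
`3 + 3 - 4 = 2` of them; having 21 neighbours each among the 29 one-neighbour vertices, they share
at least `21 + 21 - 29 = 13` of those. At most `16 - 2 - 13 = 1` common neighbour remains for the
two-neighbour vertices.
-/

open Finset

theorem Finset.card_filter_add_card_filter_le_card_add_card_filter_and {α : Type*}
    (s : Finset α) (p q : α → Prop) [DecidablePred p] [DecidablePred q] :
    #(s.filter p) + #(s.filter q) ≤ #s + #(s.filter fun x => p x ∧ q x) := by
  classical
  rw [filter_and, ← card_union_add_card_inter]
  gcongr
  exact union_subset (filter_subset _ _) (filter_subset _ _)

namespace SimpleGraph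

variable {V : Type*} [Fintype V] (G : SimpleGraph V) [DecidableRel G.Adj]

theorem card_filter_adj_adj_le_card_commonNeighbors (s : Finset V) (a b : V) :
    #(s.filter fun y => G.Adj a y ∧ G.Adj b y) ≤ Fintype.card (G.commonNeighbors a b) := by
  rw [← Set.toFinset_card]
  refine card_le_card fun y hy => ?_
  simpa [mem_commonNeighbors] using (mem_filter.mp hy).2

theorem card_filter_nbrs_eq_two_adj_adj_add_le [DecidableEq V] (K : Finset V) (a b : V) :
    #((univ \ K).filter fun y => nbrs G K y = 2 ∧ G.Adj a y ∧ G.Adj b y)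
        + nbrs G K a + nbrs G K b
        + #((univ \ K).filter fun y => nbrs G K y = 1 ∧ G.Adj a y)
        + #((univ \ K).filter fun y => nbrs G K y = 1 ∧ G.Adj b y)
      ≤ Fintype.card (G.commonNeighbors a b) + #K + bcount G K 1 := by
  set L : ℕ → Finset V := fun i => (univ \ K).filter fun y => nbrs G K y = i
  set common : V → Prop := fun y => G.Adj a y ∧ G.Adj b y
  have hK : nbrs G K a + nbrs G K b ≤ #K + #(K.filter common) :=
    card_filter_add_card_filter_le_card_add_card_filter_and K (G.Adj a) (G.Adj b)
  have hL1 : #((L 1).filter (G.Adj a)) + #((L 1).filter (G.Adj b))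
      ≤ bcount G K 1 + #((L 1).filter common) :=
    card_filter_add_card_filter_le_card_add_card_filter_and (L 1) (G.Adj a) (G.Adj b)
  have hsplit : #(K.filter common) + #((L 1).filter common) + #((L 2).filter common)
      ≤ Fintype.card (G.commonNeighbors a b) := by
    have hdisj : ∀ i, Disjoint K (L i) := fun i =>
      disjoint_sdiff.mono_right (filter_subset _ _)
    have h12 : Disjoint (L 1) (L 2) := disjoint_filter.2 fun _ _ h1 h2 => by omega
    calc _ = #((K ∪ (L 1 ∪ L 2)).filter common) := by
          rw [filter_union, filter_union, card_union_of_disjoint, card_union_of_disjoint, add_assoc]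
          · exact disjoint_filter_filter h12
          · exact disjoint_union_right.2 ⟨disjoint_filter_filter (hdisj 1),
              disjoint_filter_filter (hdisj 2)⟩
      _ ≤ _ := G.card_filter_adj_adj_le_card_commonNeighbors _ a b
  simp only [L, common, filter_filter] at hK hL1 hsplit
  omega

end SimpleGraph

theorem stmt10_general {V : Type*} [Fintype V] [DecidableEq V]
    (G : SimpleGraph V) [DecidableRel G.Adj]
    (hG : G.IsSRGWith 75 32 10 16)
    (K : Finset V) (hK : G.IsNClique 4 K)
    (hb1 : bcount G K 1 = 29)
    (x0 x1 x2 : V)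
    (hn0 : nbrs G K x0 = 3) (hn1 : nbrs G K x1 = 3) (hn2 : nbrs G K x2 = 3)
    (hind : ∀ a ∈ ({x0, x1, x2} : Finset V), ∀ b ∈ ({x0, x1, x2} : Finset V), ¬ G.Adj a b)
    (h21 : ∀ z ∈ ({x0, x1, x2} : Finset V),
      ((univ \ K).filter (fun y => nbrs G K y = 1 ∧ G.Adj z y)).card = 21) :
    ∀ a ∈ ({x0, x1, x2} : Finset V), ∀ b ∈ ({x0, x1, x2} : Finset V), a ≠ b →
      ((univ \ K).filter (fun y => nbrs G K y = 2 ∧ G.Adj a y ∧ G.Adj b y)).card ≤ 1 := by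
  intro a ha b hb hab
  have hn : ∀ z ∈ ({x0, x1, x2} : Finset V), nbrs G K z = 3 := by
    simp only [mem_insert, mem_singleton]
    rintro z (rfl | rfl | rfl) <;> assumption
  have key := G.card_filter_nbrs_eq_two_adj_adj_add_le K a b
  rw [hG.of_not_adj hab (hind a ha b hb), hK.card_eq, hb1, hn a ha, hn b hb, h21 a ha,
    h21 b hb] at key
  omega

/-- Case (0,29,39,3): any two of the three pairwise non-adjacent vertices
`x0,x1,x2` with 3 neighbors in the 4-clique `K` (each having 21 neighbors among
the 1-neighbor vertices) have at most one common neighbor among the vertices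
with exactly 2 neighbors in `K`. -/
theorem stmt10 {V : Type*} [Fintype V] [DecidableEq V]
    (G : SimpleGraph V) [DecidableRel G.Adj]
    (hG : G.IsSRGWith 75 32 10 16)
    (K : Finset V) (hK : G.IsNClique 4 K)
    (hb0 : bcount G K 0 = 0) (hb1 : bcount G K 1 = 29)
    (hb2 : bcount G K 2 = 39) (hb3 : bcount G K 3 = 3) (hb4 : bcount G K 4 = 0)
    (x0 x1 x2 : V) (h01 : x0 ≠ x1) (h02 : x0 ≠ x2) (h12 : x1 ≠ x2)
    (hK0 : x0 ∉ K) (hK1 : x1 ∉ K) (hK2 : x2 ∉ K)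
    (hn0 : nbrs G K x0 = 3) (hn1 : nbrs G K x1 = 3) (hn2 : nbrs G K x2 = 3)
    (hind : ∀ a ∈ ({x0, x1, x2} : Finset V), ∀ b ∈ ({x0, x1, x2} : Finset V), ¬ G.Adj a b)
    (h21 : ∀ z ∈ ({x0, x1, x2} : Finset V),
      ((univ \ K).filter (fun y => nbrs G K y = 1 ∧ G.Adj z y)).card = 21) :
    ∀ a ∈ ({x0, x1, x2} : Finset V), ∀ b ∈ ({x0, x1, x2} : Finset V), a ≠ b →
      ((univ \ K).filter (fun y => nbrs G K y = 2 ∧ G.Adj a y ∧ G.Adj b y)).card ≤ 1 :=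
  stmt10_general G hG K hK hb1 x0 x1 x2 hn0 hn1 hn2 hind h21
end

section
/- Let X be a (75,32,10,16) strongly regular graph in which every 4-clique is contained in a 5-clique and every vertex outside any 5-clique has exactly two neighbors in it. Let K5 be a 5-clique and X_{i,j} the set of vertices outside K5 adjacent exactly to k_i and k_j on K5. Then the induced subgraph on each X_{i,j} is isomorphic to one of: the empty graph on 7 vertices, the disjoint union of a triangle and 4 isolated vertices, or the disjoint union of two triangles and one isolated vertex. -/
open Finset

/-- Disjoint union of a triangle (on `{0,1,2}`) and 4 isolated vertices. -/
def triangleOne : SimpleGraph (Fin 7) :=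
  SimpleGraph.fromRel (fun a b => a.val < 3 ∧ b.val < 3)

/-- Disjoint union of two triangles (on `{0,1,2}` and `{3,4,5}`) and one isolated vertex. -/
def triangleTwo : SimpleGraph (Fin 7) :=
  SimpleGraph.fromRel (fun a b =>
    (a.val < 3 ∧ b.val < 3) ∨ (3 ≤ a.val ∧ a.val < 6 ∧ 3 ≤ b.val ∧ b.val < 6))

/-!
Since `a` and `b` are adjacent they have ten common neighbours: the three other vertices of `K`
and, because no outside vertex sees more than two vertices of a 5-clique, exactly the vertices of
`X_{a,b}`; so `|X_{a,b}| = 7`. If `x, y ∈ X_{a,b}` are adjacent, the 4-clique `{a, b, x, y}` lies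
in a 5-clique `{a, b, x, y, z}`, and then `z ∈ X_{a,b}` while every other vertex of `X_{a,b}`,
already seeing `a` and `b` in that 5-clique, sees none of `x, y, z`. Hence `X_{a,b}` induces a
disjoint union of triangles and isolated vertices on seven vertices, i.e. of no, one or two
triangles; such a graph is pinned down up to isomorphism by labelling each vertex with its block.
-/

namespace SimpleGraph

section Blocks

variable {α β : Type*}

lemma nonempty_iso_of_adj_iff_label {γ : Type*} [Fintype α] [Fintype β] [DecidableEq γ]
    {G : SimpleGraph α} {H : SimpleGraph β} (f : α → γ) (g : β → γ) (R : γ → γ → Prop)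
    (hG : ∀ a b, G.Adj a b ↔ a ≠ b ∧ R (f a) (f b)) (hH : ∀ a b, H.Adj a b ↔ a ≠ b ∧ R (g a) (g b))
    (hcard : ∀ c, Fintype.card {a // f a = c} = Fintype.card {b // g b = c}) :
    Nonempty (G ≃g H) := by
  let e : α ≃ β := Equiv.ofFiberEquiv fun c => Fintype.equivOfCardEq (hcard c)
  refine ⟨⟨e, fun {a b} => ?_⟩⟩
  have he : ∀ a, g (e a) = f a := Equiv.ofFiberEquiv_map _
  rw [hG, hH, e.injective.ne_iff, he, he]

variable [DecidableEq α] [DecidableEq β]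

def blockGraph (A B : Finset α) : SimpleGraph α :=
  fromRel fun a b => (a ∈ A ∧ b ∈ A) ∨ (a ∈ B ∧ b ∈ B)

lemma blockGraph_adj {A B : Finset α} {a b : α} :
    (blockGraph A B).Adj a b ↔ a ≠ b ∧ ((a ∈ A ∧ b ∈ A) ∨ (a ∈ B ∧ b ∈ B)) := by
  simp only [blockGraph, fromRel_adj]
  tauto

def blockLabel (A B : Finset α) (a : α) : Fin 3 :=
  if a ∈ A then 0 else if a ∈ B then 1 else 2

lemma blockGraph_adj_iff_blockLabel {A B : Finset α} (hAB : Disjoint A B) (a b : α) :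
    (blockGraph A B).Adj a b ↔
      a ≠ b ∧ blockLabel A B a = blockLabel A B b ∧ blockLabel A B a ≠ 2 := by
  have hAB' := Finset.disjoint_left.1 hAB
  rw [blockGraph_adj, blockLabel, blockLabel]
  split_ifs <;> simp_all

lemma card_blockLabel_fiber [Fintype α] {A B : Finset α} (hAB : Disjoint A B) (c : Fin 3) :
    Fintype.card {a // blockLabel A B a = c} = ![#A, #B, Fintype.card α - #A - #B] c := by
  have hfiber (a : α) : blockLabel A B a = c ↔ a ∈ ![A, B, (A ∪ B)ᶜ] c := by
    have hAB' : a ∈ A → a ∉ B := fun ha => Finset.disjoint_left.1 hAB ha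
    fin_cases c <;> by_cases ha : a ∈ A <;> by_cases hb : a ∈ B <;> simp_all [blockLabel]
  rw [Fintype.card_congr (Equiv.subtypeEquivRight hfiber), Fintype.card_coe]
  fin_cases c
  · rfl
  · rfl
  · show #(A ∪ B)ᶜ = _
    rw [card_compl, card_union_of_disjoint hAB, Nat.sub_sub]
    rfl

lemma nonempty_iso_blockGraph [Fintype α] [Fintype β] {A₁ B₁ : Finset α} {A₂ B₂ : Finset β}
    (h₁ : Disjoint A₁ B₁) (h₂ : Disjoint A₂ B₂) (hA : #A₁ = #A₂) (hB : #B₁ = #B₂)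
    (hcard : Fintype.card α = Fintype.card β) :
    Nonempty (blockGraph A₁ B₁ ≃g blockGraph A₂ B₂) :=
  nonempty_iso_of_adj_iff_label _ _ (fun c d => c = d ∧ c ≠ 2) (blockGraph_adj_iff_blockLabel h₁)
    (blockGraph_adj_iff_blockLabel h₂) fun c => by
      rw [card_blockLabel_fiber h₁, card_blockLabel_fiber h₂, hA, hB, hcard]

end Blocks

lemma bot_eq_blockGraph : (⊥ : SimpleGraph (Fin 7)) = blockGraph ∅ ∅ := by
  ext a b
  simp [blockGraph_adj]

lemma triangleOne_eq_blockGraph : triangleOne = blockGraph {0, 1, 2} ∅ := by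
  ext a b
  simp only [triangleOne, fromRel_adj, blockGraph_adj]
  revert a b
  decide

lemma triangleTwo_eq_blockGraph : triangleTwo = blockGraph {0, 1, 2} {3, 4, 5} := by
  ext a b
  simp only [triangleTwo, fromRel_adj, blockGraph_adj]
  revert a b
  decide

section ClosedCliques

variable {W : Type*} {H : SimpleGraph W}

def IsClosedClique (H : SimpleGraph W) (A : Finset W) : Prop :=
  H.IsClique (A : Set W) ∧ ∀ a ∈ A, ∀ b, H.Adj a b → b ∈ A

lemma isClosedClique_empty : H.IsClosedClique ∅ :=
  ⟨by simp, by simp⟩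

lemma eq_blockGraph [DecidableEq W] {A B : Finset W} (hA : H.IsClosedClique A)
    (hB : H.IsClosedClique B) (hrest : ∀ a b, a ∉ A → a ∉ B → b ∉ A → b ∉ B → ¬H.Adj a b) :
    H = blockGraph A B := by
  ext a b
  rw [blockGraph_adj]
  constructor
  · intro hab
    refine ⟨hab.ne, ?_⟩
    by_cases haA : a ∈ A
    · exact Or.inl ⟨haA, hA.2 a haA b hab⟩
    by_cases haB : a ∈ B
    · exact Or.inr ⟨haB, hB.2 a haB b hab⟩
    have hbA : b ∉ A := fun hbA => haA (hA.2 b hbA a hab.symm)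
    have hbB : b ∉ B := fun hbB => haB (hB.2 b hbB a hab.symm)
    exact (hrest a b haA haB hbA hbB hab).elim
  · rintro ⟨hab, ⟨ha, hb⟩ | ⟨ha, hb⟩⟩
    exacts [hA.1 ha hb hab, hB.1 ha hb hab]

lemma exists_eq_blockGraph_of_card_le_seven [Fintype W] [DecidableEq W] (hW : Fintype.card W ≤ 7)
    (hH : ∀ x y, H.Adj x y → ∃ T, H.IsClosedClique T ∧ #T = 3 ∧ x ∈ T ∧ y ∈ T) :
    ∃ A B : Finset W, Disjoint A B ∧ (#A = 0 ∧ #B = 0 ∨ #A = 3 ∧ #B = 0 ∨ #A = 3 ∧ #B = 3) ∧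
      H = blockGraph A B := by
  by_cases hE : ∀ x y, ¬H.Adj x y
  · exact ⟨∅, ∅, disjoint_empty_left _, Or.inl ⟨rfl, rfl⟩,
      eq_blockGraph isClosedClique_empty isClosedClique_empty fun a b _ _ _ _ => hE a b⟩
  push Not at hE
  obtain ⟨x, y, hxy⟩ := hE
  obtain ⟨A, hA, hA3, -, -⟩ := hH x y hxy
  by_cases hE' : ∀ u v, u ∉ A → ¬H.Adj u v
  · exact ⟨A, ∅, disjoint_empty_right _, Or.inr (Or.inl ⟨hA3, rfl⟩),
      eq_blockGraph hA isClosedClique_empty fun a b haA _ _ _ => hE' a b haA⟩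
  push Not at hE'
  obtain ⟨u, v, huA, huv⟩ := hE'
  obtain ⟨B, hB, hB3, huB, -⟩ := hH u v huv
  have hAB : Disjoint A B := Finset.disjoint_left.2 fun c hcA hcB =>
    huA (hA.2 c hcA u (hB.1 hcB huB fun h => huA (h ▸ hcA)))
  refine ⟨A, B, hAB, Or.inr (Or.inr ⟨hA3, hB3⟩), eq_blockGraph hA hB ?_⟩
  intro a b haA haB hbA hbB hab
  have hrest : #(A ∪ B)ᶜ ≤ 1 := by
    rw [card_compl, card_union_of_disjoint hAB, hA3, hB3]
    omega
  exact hab.ne (card_le_one.1 hrest a (by simp [haA, haB]) b (by simp [hbA, hbB]))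

end ClosedCliques

section PairClass

variable {V : Type*} [Fintype V] [DecidableEq V] {G : SimpleGraph V} [DecidableRel G.Adj]
  {K : Finset V} {a b x y : V}

/-- The paper's `X_{a,b}` for the 5-clique `K`. -/
def pairClass (G : SimpleGraph V) [DecidableRel G.Adj] (K : Finset V) (a b : V) : Finset V :=
  (univ \ K).filter fun x => K.filter (fun y => G.Adj x y) = {a, b}

omit [Fintype V] in
lemma filter_adj_eq_pair (hx : nbrs G K x ≤ 2) (ha : a ∈ K) (hb : b ∈ K) (hab : a ≠ b)
    (hxa : G.Adj x a) (hxb : G.Adj x b) : K.filter (fun y => G.Adj x y) = {a, b} := by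
  refine (eq_of_subset_of_card_le (fun c hc => ?_) ?_).symm
  · rcases mem_insert.1 hc with rfl | hc
    · exact mem_filter.2 ⟨ha, hxa⟩
    · rw [mem_singleton.1 hc]; exact mem_filter.2 ⟨hb, hxb⟩
  · rw [card_pair hab]; exact hx

lemma mem_pairClass : x ∈ pairClass G K a b ↔ x ∉ K ∧ K.filter (fun y => G.Adj x y) = {a, b} := by
  simp [pairClass]

lemma adj_of_mem_pairClass (hx : x ∈ pairClass G K a b) : G.Adj x a ∧ G.Adj x b := by
  have h := (mem_pairClass.1 hx).2
  have ha : a ∈ K.filter (fun y => G.Adj x y) := h ▸ mem_insert_self a {b}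
  have hb : b ∈ K.filter (fun y => G.Adj x y) := h ▸ mem_insert_of_mem (mem_singleton_self b)
  exact ⟨(mem_filter.1 ha).2, (mem_filter.1 hb).2⟩

lemma mem_pairClass_iff_adj (hK : ∀ x ∉ K, nbrs G K x ≤ 2) (ha : a ∈ K) (hb : b ∈ K)
    (hab : a ≠ b) : x ∈ pairClass G K a b ↔ x ∉ K ∧ G.Adj x a ∧ G.Adj x b :=
  ⟨fun hx => ⟨(mem_pairClass.1 hx).1, adj_of_mem_pairClass hx⟩,
    fun ⟨hxK, hxa, hxb⟩ => mem_pairClass.2 ⟨hxK, filter_adj_eq_pair (hK x hxK) ha hb hab hxa hxb⟩⟩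

lemma card_pairClass_add {m : ℕ} (hK : G.IsNClique m K) (hK2 : ∀ x ∉ K, nbrs G K x ≤ 2)
    (ha : a ∈ K) (hb : b ∈ K) (hab : a ≠ b) :
    #(pairClass G K a b) + (m - 2) = Fintype.card (G.commonNeighbors a b) := by
  have hsplit : (G.commonNeighbors a b).toFinset = pairClass G K a b ∪ (K \ {a, b}) := by
    ext c
    simp only [Set.mem_toFinset, mem_commonNeighbors, mem_union, mem_sdiff,
      mem_pairClass_iff_adj hK2 ha hb hab, mem_insert, mem_singleton]
    by_cases hc : c ∈ K
    · simp only [hc, not_true_eq_false, false_and, true_and, false_or, not_or]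
      exact ⟨fun h => ⟨h.1.ne', h.2.ne'⟩,
        fun h => ⟨hK.1 ha hc (Ne.symm h.1), hK.1 hb hc (Ne.symm h.2)⟩⟩
    · simp [hc, G.adj_comm]
  have hdisj : Disjoint (pairClass G K a b) (K \ {a, b}) :=
    Finset.disjoint_left.2 fun c hc hc' => (mem_pairClass.1 hc).1 (mem_sdiff.1 hc').1
  rw [← Set.toFinset_card, hsplit, card_union_of_disjoint hdisj, card_sdiff_of_subset, hK.2,
    card_pair hab]
  intro c hc
  rcases mem_insert.1 hc with rfl | hc
  · exact ha
  · rw [mem_singleton.1 hc]; exact hb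

omit [Fintype V] in
lemma eq_or_eq_of_adj_of_nbrs_le_two (hx : nbrs G K x ≤ 2) (ha : a ∈ K) (hb : b ∈ K)
    (hab : a ≠ b) (hxa : G.Adj x a) (hxb : G.Adj x b) {c : V} (hc : c ∈ K) (hxc : G.Adj x c) :
    c = a ∨ c = b := by
  have : c ∈ K.filter (fun y => G.Adj x y) := mem_filter.2 ⟨hc, hxc⟩
  simpa [filter_adj_eq_pair hx ha hb hab hxa hxb] using this

lemma exists_closed_triangle_of_adj
    (h5 : ∀ C : Finset V, G.IsNClique 5 C → ∀ x ∉ C, nbrs G C x ≤ 2)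
    (h4 : ∀ s : Finset V, G.IsNClique 4 s → ∃ t, G.IsNClique 5 t ∧ s ⊆ t)
    (hK : ∀ x ∉ K, nbrs G K x ≤ 2) (ha : a ∈ K) (hb : b ∈ K) (hab : G.Adj a b)
    (hx : x ∈ pairClass G K a b) (hy : y ∈ pairClass G K a b) (hxy : G.Adj x y) :
    ∃ T ⊆ pairClass G K a b, G.IsNClique 3 T ∧ x ∈ T ∧ y ∈ T ∧
      ∀ c ∈ T, ∀ w ∈ pairClass G K a b, G.Adj c w → w ∈ T := by
  have hmem := fun {z : V} => mem_pairClass_iff_adj (x := z) hK ha hb hab.ne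
  obtain ⟨hxK, hxa, hxb⟩ := hmem.1 hx
  obtain ⟨hyK, hya, hyb⟩ := hmem.1 hy
  have hs : G.IsNClique 4 {a, b, x, y} :=
    (is3Clique_triple_iff.2 ⟨hxb.symm, hyb.symm, hxy⟩).insert (by simp [hab, hxa.symm, hya.symm])
  obtain ⟨t, ht, hst⟩ := h4 _ hs
  have habt : {a, b} ⊆ t := fun c hc => hst (by simp at hc ⊢; tauto)
  -- a vertex of `t` other than `a, b` sees `x`, so in `K` it would be a third neighbour of `x`
  have hT : t \ {a, b} ⊆ pairClass G K a b := by
    intro c hc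
    simp only [mem_sdiff, mem_insert, mem_singleton, not_or] at hc
    obtain ⟨hct, hca, hcb⟩ := hc
    have hca' := ht.1 hct (habt (by simp)) hca
    have hcb' := ht.1 hct (habt (by simp)) hcb
    refine hmem.2 ⟨fun hcK => ?_, hca', hcb'⟩
    have hxc : G.Adj x c := ht.1 (hst (by simp)) hct (fun h => hxK (h ▸ hcK))
    exact (eq_or_eq_of_adj_of_nbrs_le_two (hK x hxK) ha hb hab.ne hxa hxb hcK hxc).elim hca hcb
  have hout : ∀ {z}, z ∉ K → z ∈ t → z ∈ t \ {a, b} := fun hzK hzt =>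
    mem_sdiff.2 ⟨hzt, fun h => hzK (by
      rcases mem_insert.1 h with rfl | h
      exacts [ha, mem_singleton.1 h ▸ hb])⟩
  refine ⟨t \ {a, b}, hT, ?_, hout hxK (hst (by simp)), hout hyK (hst (by simp)), ?_⟩
  · rw [isNClique_iff, card_sdiff_of_subset habt, ht.2, card_pair hab.ne, coe_sdiff]
    exact ⟨ht.1.subset Set.sdiff_subset, rfl⟩
  · intro c hc w hw hcw
    by_contra hwT
    obtain ⟨hwK, hwa, hwb⟩ := hmem.1 hw
    have hwt : w ∉ t := fun hwt => hwT (hout hwK hwt)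
    obtain ⟨hct, hcab⟩ := mem_sdiff.1 hc
    have hcab' := eq_or_eq_of_adj_of_nbrs_le_two (h5 t ht w hwt) (habt (by simp)) (habt (by simp))
      hab.ne hwa hwb hct hcw.symm
    exact hcab (by simpa using hcab')

lemma exists_isClosedClique_induce_pairClass
    (h5 : ∀ C : Finset V, G.IsNClique 5 C → ∀ x ∉ C, nbrs G C x ≤ 2)
    (h4 : ∀ s : Finset V, G.IsNClique 4 s → ∃ t, G.IsNClique 5 t ∧ s ⊆ t)
    (hK : ∀ x ∉ K, nbrs G K x ≤ 2) (ha : a ∈ K) (hb : b ∈ K) (hab : G.Adj a b)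
    (x y : (pairClass G K a b : Set V)) (hxy : (G.induce (pairClass G K a b : Set V)).Adj x y) :
    ∃ T, (G.induce (pairClass G K a b : Set V)).IsClosedClique T ∧ #T = 3 ∧ x ∈ T ∧ y ∈ T := by
  obtain ⟨T, hTS, hT, hxT, hyT, hTcl⟩ :=
    exists_closed_triangle_of_adj h5 h4 hK ha hb hab x.2 y.2 hxy
  have hT' : (G.induce (pairClass G K a b : Set V)).IsNClique 3
      (T.subtype (· ∈ (pairClass G K a b : Set V))) := by
    rw [isNClique_induce_iff]
    convert hT
    exact subtype_map_of_mem fun x hx => hTS hx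
  exact ⟨_, ⟨hT'.1, fun c hc w hcw => mem_subtype.2 (hTcl c (mem_subtype.1 hc) w w.2 hcw)⟩, hT'.2,
    mem_subtype.2 hxT, mem_subtype.2 hyT⟩

end PairClass

end SimpleGraph

open SimpleGraph in
/-- For a 5-clique `K` in a (75,32,10,16) SRG (with the stated clique
properties), the induced subgraph on each part `X_{i,j}` is isomorphic to the
empty graph on 7 vertices, a triangle plus 4 isolated vertices, or two
triangles plus one isolated vertex. -/
theorem stmt12 {V : Type*} [Fintype V] [DecidableEq V]
    (G : SimpleGraph V) [DecidableRel G.Adj]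
    (hG : G.IsSRGWith 75 32 10 16)
    (h5 : ∀ C : Finset V, G.IsNClique 5 C → ∀ x ∉ C, nbrs G C x = 2)
    (h4 : ∀ s : Finset V, G.IsNClique 4 s → ∃ t, G.IsNClique 5 t ∧ s ⊆ t)
    (K : Finset V) (hK : G.IsNClique 5 K) :
    ∀ a ∈ K, ∀ b ∈ K, a ≠ b →
      ∀ S : Finset V,
        S = (univ \ K).filter (fun x => K.filter (fun y => G.Adj x y) = {a, b}) →
        (Nonempty (G.induce (S : Set V) ≃g (⊥ : SimpleGraph (Fin 7))) ∨
         Nonempty (G.induce (S : Set V) ≃g triangleOne) ∨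
         Nonempty (G.induce (S : Set V) ≃g triangleTwo)) := by
  intro a ha b hb hab S hS
  change S = pairClass G K a b at hS
  subst hS
  have h5' : ∀ C : Finset V, G.IsNClique 5 C → ∀ x ∉ C, nbrs G C x ≤ 2 :=
    fun C hC x hx => (h5 C hC x hx).le
  have hadj : G.Adj a b := hK.1 ha hb hab
  have hS : Fintype.card (pairClass G K a b : Set V) = 7 := by
    have := card_pairClass_add hK (h5' K hK) ha hb hab
    rw [hG.of_adj a b hadj] at this
    simp only [coe_sort_coe, Fintype.card_coe]
    omega
  obtain ⟨A, B, hAB, hcard, hiso⟩ := exists_eq_blockGraph_of_card_le_seven hS.le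
    (exists_isClosedClique_induce_pairClass h5' h4 (h5' K hK) ha hb hadj)
  rw [hiso, bot_eq_blockGraph, triangleOne_eq_blockGraph, triangleTwo_eq_blockGraph]
  rcases hcard with ⟨hA, hB⟩ | ⟨hA, hB⟩ | ⟨hA, hB⟩
  · exact Or.inl (nonempty_iso_blockGraph hAB (disjoint_empty_left _) hA hB hS)
  · exact Or.inr (Or.inl (nonempty_iso_blockGraph hAB (by decide) hA hB hS))
  · exact Or.inr (Or.inr (nonempty_iso_blockGraph hAB (by decide) hA hB hS))
end

section
/- Let X be a (75,32,10,16) strongly regular graph in which every vertex outside any 5-clique has exactly two neighbors in it. Let K5 = {k1,...,k5} be a 5-clique, and let T ⊆ X_{i,j}, T' ⊆ X_{k,l} be triangles in distinct parts (where X_{a,b} is the set of vertices adjacent exactly to k_a,k_b on K5). If |{i,j,k,l}| = 3 then the edges between T and T' form a perfect matching; if |{i,j,k,l}| = 4 then they form the complement of a perfect matching (i.e., each vertex of T is adjacent to exactly 2 vertices of T'). -/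
open Finset

/-!
If `T` is a triangle in `X_{a,b}`, then `{a, b} ∪ T` is a 5-clique, so every vertex `y` outside
it has exactly two neighbours in it. For `y ∈ X_{c,d}` its neighbours among `a, b` are the
`|{a,b} ∩ {c,d}| = 4 - |{a,b,c,d}|` common points, so `y` has `|{a,b,c,d}| - 2` neighbours in `T`.
-/

namespace SimpleGraph

variable {V : Type*} {G : SimpleGraph V}

theorem IsNClique.union_pair [DecidableEq V] {n : ℕ} {T : Finset V} {a b : V}
    (hT : G.IsNClique n T) (hab : G.Adj a b) (hTa : ∀ x ∈ T, G.Adj x a)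
    (hTb : ∀ x ∈ T, G.Adj x b) :
    G.IsNClique (n + 2) ({a, b} ∪ T) := by
  rw [insert_union, singleton_union]
  refine (hT.insert fun x hx => (hTb x hx).symm).insert fun x hx => ?_
  rcases mem_insert.mp hx with rfl | hx
  · exact hab
  · exact (hTa x hx).symm

theorem adj_of_filter_adj_eq [DecidableRel G.Adj] {K s : Finset V} {x z : V}
    (hx : K.filter (fun y => G.Adj x y) = s) (hz : z ∈ s) : G.Adj x z :=
  (mem_filter.mp (hx ▸ hz)).2

theorem nbrs_union [DecidableEq V] [DecidableRel G.Adj] {s t : Finset V} (hst : Disjoint s t)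
    (x : V) :
    nbrs G (s ∪ t) x = nbrs G s x + nbrs G t x := by
  rw [nbrs, filter_union, card_union_of_disjoint (disjoint_filter_filter hst), nbrs, nbrs]

theorem nbrs_eq_card_inter [DecidableEq V] [DecidableRel G.Adj] {K s t : Finset V} {y : V}
    (hy : K.filter (fun z => G.Adj y z) = s) (htK : t ⊆ K) :
    nbrs G t y = (t ∩ s).card := by
  rw [nbrs, ← hy]
  congr 1
  ext z
  simp only [mem_filter, mem_inter]
  exact ⟨fun h => ⟨h.1, htK h.1, h.2⟩, fun h => ⟨h.1, h.2.2⟩⟩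

theorem card_filter_adj_eq_nbrs [DecidableEq V] [DecidableRel G.Adj] (T : Finset V) (y : V) :
    (T.filter (fun x => G.Adj x y)).card = nbrs G T y := by
  simp only [nbrs, G.adj_comm]

theorem nbrs_add_card_inter_eq_two [DecidableEq V] [DecidableRel G.Adj]
    (h5 : ∀ C : Finset V, G.IsNClique 5 C → ∀ x ∉ C, nbrs G C x = 2)
    {K T s : Finset V} {a b y : V} (hK : G.IsClique (K : Set V)) (ha : a ∈ K) (hb : b ∈ K)
    (hab : a ≠ b) (hT : G.IsNClique 3 T)
    (hTX : ∀ x ∈ T, x ∉ K ∧ K.filter (fun y => G.Adj x y) = {a, b})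
    (hyK : y ∉ K) (hy : K.filter (fun z => G.Adj y z) = s) (hs : ({a, b} : Finset V) ≠ s) :
    nbrs G T y + ({a, b} ∩ s).card = 2 := by
  have hpairK : ({a, b} : Finset V) ⊆ K := insert_subset ha (singleton_subset_iff.mpr hb)
  have hC : G.IsNClique 5 ({a, b} ∪ T) :=
    hT.union_pair (hK ha hb hab)
      (fun x hx => adj_of_filter_adj_eq (hTX x hx).2 (mem_insert_self a {b}))
      (fun x hx => adj_of_filter_adj_eq (hTX x hx).2 (mem_insert_of_mem (mem_singleton_self b)))
  have hdisj : Disjoint ({a, b} : Finset V) T :=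
    Finset.disjoint_left.mpr fun z hz hzT => (hTX z hzT).1 (hpairK hz)
  have hyC : y ∉ ({a, b} : Finset V) ∪ T := by
    intro hyC
    rcases mem_union.mp hyC with hyab | hyT
    · exact hyK (hpairK hyab)
    · exact hs ((hTX y hyT).2.symm.trans hy)
  have h2 := h5 _ hC y hyC
  rw [nbrs_union hdisj, nbrs_eq_card_inter hy hpairK] at h2
  omega

theorem card_pair_union_add_card_inter [DecidableEq V] {a b c d : V} (hab : a ≠ b)
    (hcd : c ≠ d) :
    ({a, b, c, d} : Finset V).card + ({a, b} ∩ {c, d} : Finset V).card = 4 := by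
  have hunion : ({a, b, c, d} : Finset V) = {a, b} ∪ {c, d} := by
    rw [insert_union, singleton_union]
  rw [hunion, card_union_add_card_inter, card_pair hab, card_pair hcd]

end SimpleGraph

theorem stmt13_general {V : Type*} [DecidableEq V]
    (G : SimpleGraph V) [DecidableRel G.Adj]
    (h5 : ∀ C : Finset V, G.IsNClique 5 C → ∀ x ∉ C, nbrs G C x = 2)
    (K : Finset V) (hK : G.IsNClique 5 K)
    (a b c d : V) (ha : a ∈ K) (hb : b ∈ K) (hc : c ∈ K) (hd : d ∈ K)
    (hab : a ≠ b) (hcd : c ≠ d)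
    (hdistinct : ({a, b} : Finset V) ≠ {c, d})
    (T T' : Finset V) (hT : G.IsNClique 3 T) (hT' : G.IsNClique 3 T')
    (hTX : ∀ x ∈ T, x ∉ K ∧ K.filter (fun y => G.Adj x y) = {a, b})
    (hT'X : ∀ x ∈ T', x ∉ K ∧ K.filter (fun y => G.Adj x y) = {c, d}) :
    (({a, b, c, d} : Finset V).card = 3 →
      (∀ x ∈ T, (T'.filter (fun y => G.Adj x y)).card = 1) ∧
      (∀ y ∈ T', (T.filter (fun x => G.Adj x y)).card = 1)) ∧
    (({a, b, c, d} : Finset V).card = 4 →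
      (∀ x ∈ T, (T'.filter (fun y => G.Adj x y)).card = 2) ∧
      (∀ y ∈ T', (T.filter (fun x => G.Adj x y)).card = 2)) := by
  have hcard := SimpleGraph.card_pair_union_add_card_inter hab hcd
  have hT_side : ∀ x ∈ T,
      (T'.filter (fun y => G.Adj x y)).card + (({a, b} : Finset V) ∩ {c, d}).card = 2 := by
    intro x hx
    rw [inter_comm]
    exact SimpleGraph.nbrs_add_card_inter_eq_two h5 hK.1 hc hd hcd hT' hT'X (hTX x hx).1
      (hTX x hx).2 (Ne.symm hdistinct)
  have hT'_side : ∀ y ∈ T',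
      (T.filter (fun x => G.Adj x y)).card + (({a, b} : Finset V) ∩ {c, d}).card = 2 := by
    intro y hy
    rw [SimpleGraph.card_filter_adj_eq_nbrs]
    exact SimpleGraph.nbrs_add_card_inter_eq_two h5 hK.1 ha hb hab hT hTX (hT'X y hy).1
      (hT'X y hy).2 hdistinct
  exact ⟨fun _ => ⟨fun x hx => by have := hT_side x hx; omega,
      fun y hy => by have := hT'_side y hy; omega⟩,
    fun _ => ⟨fun x hx => by have := hT_side x hx; omega,
      fun y hy => by have := hT'_side y hy; omega⟩⟩

/-- Two triangles `T ⊆ X_{a,b}` and `T' ⊆ X_{c,d}` in distinct parts of the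
partition induced by a 5-clique: if `|{a,b,c,d}| = 3` the edges between `T`
and `T'` form a perfect matching; if `|{a,b,c,d}| = 4` they form the
complement of a perfect matching. -/
theorem stmt13 {V : Type*} [Fintype V] [DecidableEq V]
    (G : SimpleGraph V) [DecidableRel G.Adj]
    (hG : G.IsSRGWith 75 32 10 16)
    (h5 : ∀ C : Finset V, G.IsNClique 5 C → ∀ x ∉ C, nbrs G C x = 2)
    (K : Finset V) (hK : G.IsNClique 5 K)
    (a b c d : V) (ha : a ∈ K) (hb : b ∈ K) (hc : c ∈ K) (hd : d ∈ K)
    (hab : a ≠ b) (hcd : c ≠ d)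
    (hdistinct : ({a, b} : Finset V) ≠ {c, d})
    (T T' : Finset V) (hT : G.IsNClique 3 T) (hT' : G.IsNClique 3 T')
    (hTX : ∀ x ∈ T, x ∉ K ∧ K.filter (fun y => G.Adj x y) = {a, b})
    (hT'X : ∀ x ∈ T', x ∉ K ∧ K.filter (fun y => G.Adj x y) = {c, d}) :
    (({a, b, c, d} : Finset V).card = 3 →
      (∀ x ∈ T, (T'.filter (fun y => G.Adj x y)).card = 1) ∧
      (∀ y ∈ T', (T.filter (fun x => G.Adj x y)).card = 1)) ∧
    (({a, b, c, d} : Finset V).card = 4 →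
      (∀ x ∈ T, (T'.filter (fun y => G.Adj x y)).card = 2) ∧
      (∀ y ∈ T', (T.filter (fun x => G.Adj x y)).card = 2)) :=
  stmt13_general G h5 K hK a b c d ha hb hc hd hab hcd hdistinct T T' hT hT' hTX hT'X
end

section
/- Let X be a (75,32,10,16) strongly regular graph with a 4-clique K whose outside-degree distribution is (1,26,42,2) with b_4=0; let x0 be the unique vertex with 0 neighbors in K and x1, x2 the two (non-adjacent) vertices with 3 neighbors in K, both adjacent to x0. Then each of x1, x2 has exactly 19 neighbors among the vertices with 1 neighbor in K and exactly 9 neighbors among the vertices with 2 neighbors in K. Moreover the number of vertices with 1 neighbor in K adjacent to both x1 and x2 is 12 or 13. -/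
open Finset

/-! Double counting the paths z – y – k with k ∈ K shows that for a vertex z ∉ K with m
neighbours in the clique, the neighbours y of z outside K satisfy
∑ |N(y) ∩ K| = mλ + (|K| - m)μ - m(|K| - 1), which is 37 for z = x₁. The 29 neighbours of x₁
outside K are x₀ and vertices with 1 or 2 neighbours in K (the only vertices with 3 are x₁ and
x₂, and x₁ ≁ x₂), so f₁ + f₂ = 28 and f₁ + 2f₂ = 37, i.e. f₁ = 19 and f₂ = 9.

The 16 common neighbours of x₁ and x₂ include at least 2 clique vertices (two 3-subsets of a
4-set meet in at least 2 points) and also x₀, leaving at most 13 with one neighbour in K; at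
least 19 + 19 - 26 = 12 by inclusion–exclusion among the 26 such vertices. -/

lemma Finset.card_add_card_le_card_add_card_inter {α : Type*} [DecidableEq α]
    {s t u : Finset α} (hs : s ⊆ u) (ht : t ⊆ u) : #s + #t ≤ #u + #(s ∩ t) := by
  rw [← card_union_add_card_inter]
  exact Nat.add_le_add_right (card_le_card (union_subset hs ht)) _

lemma Finset.card_eq_of_forall_le_two {α : Type*} {s : Finset α} {f : α → ℕ}
    (hf : ∀ y ∈ s, f y ≤ 2) :
    #s = #{y ∈ s | f y = 0} + #{y ∈ s | f y = 1} + #{y ∈ s | f y = 2} := by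
  rw [card_eq_sum_card_fiberwise (t := range 3) fun y hy =>
    mem_range.2 (Nat.lt_succ_of_le (hf y hy))]
  simp [sum_range_succ]

lemma Finset.sum_eq_of_forall_le_two {α : Type*} {s : Finset α} {f : α → ℕ}
    (hf : ∀ y ∈ s, f y ≤ 2) :
    ∑ y ∈ s, f y = #{y ∈ s | f y = 1} + 2 * #{y ∈ s | f y = 2} := by
  rw [← sum_fiberwise_of_maps_to (t := range 3) fun y hy =>
    mem_range.2 (Nat.lt_succ_of_le (hf y hy))]
  have hfiber : ∀ i, ∑ y ∈ s with f y = i, f y = #{y ∈ s | f y = i} * i := fun i =>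
    sum_const_nat fun y hy => (mem_filter.1 hy).2
  simp [sum_range_succ, hfiber, mul_comm]

namespace SimpleGraph

variable {V : Type*} [DecidableEq V] {G : SimpleGraph V} [DecidableRel G.Adj] {K : Finset V}

lemma IsClique.nbrs_eq (hK : G.IsClique (K : Set V)) {y : V} (hy : y ∈ K) :
    nbrs G K y = #K - 1 := by
  rw [nbrs, ← card_erase_of_mem hy]
  congr 1
  ext x
  simp only [mem_filter, mem_erase]
  exact ⟨fun ⟨hx, hyx⟩ => ⟨hyx.ne', hx⟩, fun ⟨hxy, hx⟩ => ⟨hx, hK hy hx hxy.symm⟩⟩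

variable [Fintype V]

lemma nbrs_eq_card_inter_s14 (K : Finset V) (x : V) :
    nbrs G K x = #(K ∩ G.neighborFinset x) := by
  simp [nbrs, ← filter_mem_eq_inter]

lemma card_neighborFinset_inter (v w : V) :
    #(G.neighborFinset v ∩ G.neighborFinset w) = Fintype.card (G.commonNeighbors v w) := by
  rw [← Set.toFinset_card]
  congr 1
  ext y
  simp [mem_commonNeighbors]

lemma IsSRGWith.sum_nbrs_neighborFinset_s14 {n d l m : ℕ} (hG : G.IsSRGWith n d l m) {z : V}
    (hz : z ∉ K) :
    ∑ y ∈ G.neighborFinset z, nbrs G K y = nbrs G K z * l + (#K - nbrs G K z) * m := by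
  have hcommon : ∀ k ∈ K, #((G.neighborFinset z).bipartiteBelow G.Adj k) =
      if G.Adj z k then l else m := by
    intro k hk
    have hbelow : (G.neighborFinset z).bipartiteBelow G.Adj k =
        G.neighborFinset z ∩ G.neighborFinset k := by
      ext y
      simp [bipartiteBelow, adj_comm]
    rw [hbelow, card_neighborFinset_inter]
    split_ifs with hzk
    exacts [hG.of_adj z k hzk, hG.of_not_adj (fun h => hz (h ▸ hk)) hzk]
  have hnot : #{k ∈ K | ¬G.Adj z k} = #K - nbrs G K z := by
    rw [nbrs, ← card_filter_add_card_filter_not (s := K) (fun k => G.Adj z k)]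
    omega
  calc ∑ y ∈ G.neighborFinset z, nbrs G K y
      = ∑ k ∈ K, #((G.neighborFinset z).bipartiteBelow G.Adj k) :=
        sum_card_bipartiteAbove_eq_sum_card_bipartiteBelow _
    _ = ∑ k ∈ K, if G.Adj z k then l else m := sum_congr rfl hcommon
    _ = nbrs G K z * l + (#K - nbrs G K z) * m := by
        rw [sum_ite, sum_const, sum_const, hnot, smul_eq_mul, smul_eq_mul, nbrs]

lemma IsSRGWith.sum_nbrs_neighborFinset_sdiff {n d l m : ℕ} (hG : G.IsSRGWith n d l m)
    (hK : G.IsClique (K : Set V)) {z : V} (hz : z ∉ K) :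
    ∑ y ∈ G.neighborFinset z \ K, nbrs G K y + nbrs G K z * (#K - 1) =
      nbrs G K z * l + (#K - nbrs G K z) * m := by
  rw [← hG.sum_nbrs_neighborFinset_s14 hz, ← sum_inter_add_sum_sdiff (G.neighborFinset z) K,
    add_comm, sum_const_nat fun y hy => hK.nbrs_eq (mem_inter.1 hy).2, inter_comm,
    nbrs_eq_card_inter_s14]

lemma mem_of_bcount_le_card {s : Finset V} {i : ℕ} (hs : ∀ x ∈ s, x ∉ K ∧ nbrs G K x = i)
    (h : bcount G K i ≤ #s) {y : V} (hyK : y ∉ K) (hy : nbrs G K y = i) : y ∈ s := by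
  have hfiber : s = {x ∈ univ \ K | nbrs G K x = i} :=
    eq_of_subset_of_card_le (fun x hx => by simpa using hs x hx) h
  simp [hfiber, hyK, hy]

lemma nbrs_le_two_of_adj (hK4 : #K = 4) (hb3 : bcount G K 3 = 2) (hb4 : bcount G K 4 = 0)
    {z w : V} (hzw : z ≠ w) (hzK : z ∉ K) (hz : nbrs G K z = 3) (hwK : w ∉ K)
    (hw : nbrs G K w = 3) (hnadj : ¬G.Adj z w) {y : V} (hyK : y ∉ K) (hy : G.Adj z y) :
    nbrs G K y ≤ 2 := by
  have hle : nbrs G K y ≤ 4 := hK4 ▸ card_filter_le _ _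
  have hne3 : nbrs G K y ≠ 3 := fun h3 => by
    have hyzw := mem_of_bcount_le_card (s := {z, w}) (by simp [hzK, hz, hwK, hw])
      (by rw [hb3, card_pair hzw]) hyK h3
    rcases mem_insert.1 hyzw with rfl | hyw
    exacts [G.irrefl hy, hnadj (mem_singleton.1 hyw ▸ hy)]
  have hne4 : nbrs G K y ≠ 4 := fun h4 =>
    notMem_empty y (mem_of_bcount_le_card (s := ∅) (by simp) (by simp [hb4]) hyK h4)
  omega

lemma card_filter_nbrs_neighborFinset_sdiff_eq (hG : G.IsSRGWith 75 32 10 16)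
    (hK : G.IsNClique 4 K) (hb0 : bcount G K 0 = 1) (hb3 : bcount G K 3 = 2)
    (hb4 : bcount G K 4 = 0) {x0 z w : V} (hx0K : x0 ∉ K) (hx0 : nbrs G K x0 = 0)
    (hzw : z ≠ w) (hzK : z ∉ K) (hz : nbrs G K z = 3) (hwK : w ∉ K) (hw : nbrs G K w = 3)
    (hnadj : ¬G.Adj z w) (h0z : G.Adj x0 z) :
    #{y ∈ G.neighborFinset z \ K | nbrs G K y = 1} = 19 ∧
      #{y ∈ G.neighborFinset z \ K | nbrs G K y = 2} = 9 := by
  have hcard : #(G.neighborFinset z \ K) = 29 := by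
    rw [card_sdiff, ← nbrs_eq_card_inter_s14, hz, card_neighborFinset_eq_degree, hG.regular z]
  have hsum : ∑ y ∈ G.neighborFinset z \ K, nbrs G K y = 37 := by
    have := hG.sum_nbrs_neighborFinset_sdiff hK.isClique hzK
    rw [hz, hK.card_eq] at this
    omega
  set S := G.neighborFinset z \ K
  have hzero : {y ∈ S | nbrs G K y = 0} = {x0} := by
    ext y
    simp only [S, mem_filter, mem_sdiff, mem_neighborFinset, mem_singleton]
    constructor
    · rintro ⟨⟨-, hyK⟩, hy⟩
      exact mem_singleton.1 <|
        mem_of_bcount_le_card (by simp [hx0K, hx0]) (by simp [hb0]) hyK hy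
    · rintro rfl
      exact ⟨⟨h0z.symm, hx0K⟩, hx0⟩
  have hle : ∀ y ∈ S, nbrs G K y ≤ 2 := fun y hy =>
    have hy' := mem_sdiff.1 hy
    nbrs_le_two_of_adj hK.card_eq hb3 hb4 hzw hzK hz hwK hw hnadj hy'.2
      (mem_neighborFinset _ _ _ |>.1 hy'.1)
  have hcount := card_eq_of_forall_le_two hle
  have hweight := sum_eq_of_forall_le_two hle
  rw [hzero, card_singleton] at hcount
  omega

lemma card_filter_nbrs_add_card_filter_nbrs_le (i : ℕ) (x1 x2 : V) :
    #{y ∈ G.neighborFinset x1 \ K | nbrs G K y = i} +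
        #{y ∈ G.neighborFinset x2 \ K | nbrs G K y = i} ≤
      bcount G K i +
        #{y ∈ (G.neighborFinset x1 ∩ G.neighborFinset x2) \ K | nbrs G K y = i} := by
  have hsdiff : (G.neighborFinset x1 ∩ G.neighborFinset x2) \ K =
      (G.neighborFinset x1 \ K) ∩ (G.neighborFinset x2 \ K) := inf_sdiff
  rw [hsdiff, filter_inter_distrib]
  exact card_add_card_le_card_add_card_inter
    (filter_subset_filter _ (sdiff_subset_sdiff (subset_univ _) subset_rfl))
    (filter_subset_filter _ (sdiff_subset_sdiff (subset_univ _) subset_rfl))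

lemma card_filter_nbrs_neighborFinset_inter_sdiff_le (hG : G.IsSRGWith 75 32 10 16) (hK4 : #K = 4)
    {x0 x1 x2 : V} (hx0K : x0 ∉ K) (hx0 : nbrs G K x0 = 0) (h12 : x1 ≠ x2)
    (hx1 : nbrs G K x1 = 3) (hx2 : nbrs G K x2 = 3) (hnadj : ¬G.Adj x1 x2)
    (h01 : G.Adj x0 x1) (h02 : G.Adj x0 x2) :
    #{y ∈ (G.neighborFinset x1 ∩ G.neighborFinset x2) \ K | nbrs G K y = 1} ≤ 13 := by
  set T := (G.neighborFinset x1 ∩ G.neighborFinset x2) \ K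
  have hcommon : #(G.neighborFinset x1 ∩ G.neighborFinset x2) = 16 := by
    rw [card_neighborFinset_inter, hG.of_not_adj h12 hnadj]
  have hK2 : 2 ≤ #(K ∩ (G.neighborFinset x1 ∩ G.neighborFinset x2)) := by
    have := card_add_card_le_card_add_card_inter
      (inter_subset_left : K ∩ G.neighborFinset x1 ⊆ K)
      (inter_subset_left : K ∩ G.neighborFinset x2 ⊆ K)
    rw [← inter_inter_distrib_left, ← nbrs_eq_card_inter_s14, ← nbrs_eq_card_inter_s14, hx1, hx2,
      hK4] at this
    omega
  have hT : #T ≤ 14 := by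
    rw [card_sdiff, hcommon]
    omega
  have hx0T : x0 ∈ T := by simp [T, hx0K, h01.symm, h02.symm]
  have hsub : {y ∈ T | nbrs G K y = 1} ⊆ T.erase x0 := fun y hy => by
    simp only [mem_filter] at hy
    exact mem_erase.2 ⟨fun h => by simp [h, hx0] at hy, hy.1⟩
  have := card_le_card hsub
  rw [card_erase_of_mem hx0T] at this
  omega

end SimpleGraph

open SimpleGraph

theorem stmt14_general {V : Type*} [Fintype V] [DecidableEq V]
    (G : SimpleGraph V) [DecidableRel G.Adj]
    (hG : G.IsSRGWith 75 32 10 16)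
    (K : Finset V) (hK : G.IsNClique 4 K)
    (hb0 : bcount G K 0 = 1) (hb1 : bcount G K 1 = 26)
    (hb3 : bcount G K 3 = 2) (hb4 : bcount G K 4 = 0)
    (x0 x1 x2 : V) (hx0K : x0 ∉ K) (hx0 : nbrs G K x0 = 0)
    (h12 : x1 ≠ x2) (hx1K : x1 ∉ K) (hx1 : nbrs G K x1 = 3)
    (hx2K : x2 ∉ K) (hx2 : nbrs G K x2 = 3)
    (hnadj : ¬ G.Adj x1 x2) (h01 : G.Adj x0 x1) (h02 : G.Adj x0 x2) :
    (∀ z ∈ ({x1, x2} : Finset V),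
      ((univ \ K).filter (fun y => nbrs G K y = 1 ∧ G.Adj z y)).card = 19 ∧
      ((univ \ K).filter (fun y => nbrs G K y = 2 ∧ G.Adj z y)).card = 9) ∧
    (((univ \ K).filter (fun y => nbrs G K y = 1 ∧ G.Adj x1 y ∧ G.Adj x2 y)).card = 12 ∨
     ((univ \ K).filter (fun y => nbrs G K y = 1 ∧ G.Adj x1 y ∧ G.Adj x2 y)).card = 13) := by
  have h1 := card_filter_nbrs_neighborFinset_sdiff_eq hG hK hb0 hb3 hb4 hx0K hx0 h12 hx1K hx1
    hx2K hx2 hnadj h01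
  have h2 := card_filter_nbrs_neighborFinset_sdiff_eq hG hK hb0 hb3 hb4 hx0K hx0 h12.symm hx2K
    hx2 hx1K hx1 (fun h => hnadj h.symm) h02
  have hlow := card_filter_nbrs_add_card_filter_nbrs_le (G := G) (K := K) 1 x1 x2
  have hup := card_filter_nbrs_neighborFinset_inter_sdiff_le hG hK.card_eq hx0K hx0 h12 hx1 hx2
    hnadj h01 h02
  have hadj : ∀ (z : V) (i : ℕ), {y ∈ univ \ K | nbrs G K y = i ∧ G.Adj z y} =
      {y ∈ G.neighborFinset z \ K | nbrs G K y = i} := fun z i => by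
    ext y
    simp only [mem_filter, mem_sdiff, mem_univ, true_and, mem_neighborFinset]
    tauto
  have hcommon : {y ∈ univ \ K | nbrs G K y = 1 ∧ G.Adj x1 y ∧ G.Adj x2 y} =
      {y ∈ (G.neighborFinset x1 ∩ G.neighborFinset x2) \ K | nbrs G K y = 1} := by
    ext y
    simp only [mem_filter, mem_sdiff, mem_univ, true_and, mem_inter, mem_neighborFinset]
    tauto
  simp only [mem_insert, mem_singleton, forall_eq_or_imp, forall_eq, hadj, hcommon]
  omega

/-- Case (1,26,42,2): each of the two non-adjacent vertices `x1,x2` with 3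
neighbors in the 4-clique `K` (both adjacent to the 0-neighbor vertex `x0`) has
exactly 19 neighbors among the 1-neighbor vertices and 9 among the 2-neighbor
vertices; moreover 12 or 13 of the 1-neighbor vertices are adjacent to both. -/
theorem stmt14 {V : Type*} [Fintype V] [DecidableEq V]
    (G : SimpleGraph V) [DecidableRel G.Adj]
    (hG : G.IsSRGWith 75 32 10 16)
    (K : Finset V) (hK : G.IsNClique 4 K)
    (hb0 : bcount G K 0 = 1) (hb1 : bcount G K 1 = 26)
    (hb2 : bcount G K 2 = 42) (hb3 : bcount G K 3 = 2) (hb4 : bcount G K 4 = 0)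
    (x0 x1 x2 : V) (hx0K : x0 ∉ K) (hx0 : nbrs G K x0 = 0)
    (h12 : x1 ≠ x2) (hx1K : x1 ∉ K) (hx1 : nbrs G K x1 = 3)
    (hx2K : x2 ∉ K) (hx2 : nbrs G K x2 = 3)
    (hnadj : ¬ G.Adj x1 x2) (h01 : G.Adj x0 x1) (h02 : G.Adj x0 x2) :
    (∀ z ∈ ({x1, x2} : Finset V),
      ((univ \ K).filter (fun y => nbrs G K y = 1 ∧ G.Adj z y)).card = 19 ∧
      ((univ \ K).filter (fun y => nbrs G K y = 2 ∧ G.Adj z y)).card = 9) ∧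
    (((univ \ K).filter (fun y => nbrs G K y = 1 ∧ G.Adj x1 y ∧ G.Adj x2 y)).card = 12 ∨
     ((univ \ K).filter (fun y => nbrs G K y = 1 ∧ G.Adj x1 y ∧ G.Adj x2 y)).card = 13) :=
  stmt14_general G hG K hK hb0 hb1 hb3 hb4 x0 x1 x2 hx0K hx0 h12 hx1K hx1 hx2K hx2 hnadj h01 h02
end

section
/- Let G be a graph with adjacency matrix A and let r be an eigenvalue of A with multiplicity f. Then there exists a set S of n - f vertices of G such that the induced subgraph G[S] does not have r as an eigenvalue of its adjacency matrix. -/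
/-!
Put `M = A - r • 1`, so that `ker M` is the `r`-eigenspace. Some `n - f` standard basis vectors
span a complement `P` of `ker M`; let `S` be their indices. If `x` were an `r`-eigenvector of
`A[S]`, its extension `y` by zero would lie in `P` with `M y` vanishing on `S`, i.e. `M y ⊥ P`.
As `M` is symmetric, also `M y ⊥ ker M`, hence `M y = 0` and `y ∈ ker M ⊓ P = ⊥`.
-/

open Module Submodule Matrix

theorem Module.Basis.exists_finset_isCompl_span_image {K V ι : Type*} [DivisionRing K]
    [AddCommGroup V] [Module K V] [Fintype ι] (b : Basis ι K V) (W : Submodule K V) :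
    ∃ S : Finset ι, IsCompl W (span K (b '' S)) ∧ S.card + finrank K W = Fintype.card ι := by
  classical
  have : FiniteDimensional K V := b.finiteDimensional_of_finite
  -- `S` indexes basis vectors whose images form a basis of `V ⧸ W`
  obtain ⟨S, -, -, hspan, hli⟩ := exists_linearIndepOn_extension (K := K) (v := W.mkQ ∘ b)
    (s := ∅) (t := Set.univ) (linearIndepOn_empty K _) (Set.empty_subset _)
  lift S to Finset ι using S.toFinite
  have hcompl : IsCompl W (span K (b '' S)) := by
    refine ⟨?_, ?_⟩
    · have := range_ker_disjoint (f := W.mkQ) (v := b ∘ ((↑) : S → ι)) hli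
      rwa [Set.range_comp, Subtype.range_coe, ker_mkQ, disjoint_comm] at this
    · have htop : map W.mkQ (span K (b '' S)) = ⊤ := by
        rw [map_span, ← Set.image_comp, eq_top_iff, ← W.range_mkQ, LinearMap.range_eq_map,
          ← b.span_eq, map_span, ← Set.range_comp, ← Set.image_univ]
        exact span_le.2 hspan
      rw [codisjoint_iff, ← comap_map_mkQ, htop, comap_top]
  have hfinrank : finrank K (span K (b '' S)) = S.card := by
    rw [← Finset.coe_image, finrank_span_finset_eq_card (by
      simpa using (b.linearIndependent.linearIndepOn _).id_image),
      Finset.card_image_of_injective _ b.injective]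
  refine ⟨S, hcompl, ?_⟩
  rw [← hfinrank, add_comm, finrank_add_eq_of_isCompl hcompl, finrank_eq_card_basis b]

theorem Pi.mem_span_basisFun_image_iff {R ι : Type*} [Semiring R] [Finite ι] {S : Set ι}
    {p : ι → R} : p ∈ span R (Pi.basisFun R ι '' S) ↔ ∀ i ∉ S, p i = 0 := by
  rw [Basis.mem_span_image]
  simp [Set.subset_def, not_imp_comm]

namespace Matrix

theorem IsSymm.eq_zero_of_mem_of_mulVec_dotProduct_eq_zero {R n : Type*} [CommSemiring R]
    [Fintype n] {M : Matrix n n R} (hM : M.IsSymm) {P : Submodule R (n → R)}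
    (hP : IsCompl (LinearMap.ker M.mulVecLin) P) {x : n → R} (hx : x ∈ P)
    (hMx : ∀ p ∈ P, M *ᵥ x ⬝ᵥ p = 0) : x = 0 := by
  have hker : ∀ k ∈ LinearMap.ker M.mulVecLin, M *ᵥ x ⬝ᵥ k = 0 := fun k hk => by
    rw [LinearMap.mem_ker, mulVecLin_apply] at hk
    rw [← vecMul_transpose, hM.eq, ← dotProduct_mulVec, hk, dotProduct_zero]
  have hMx0 : M *ᵥ x = 0 := dotProduct_eq_zero_iff.1 fun w => by
    obtain ⟨k, hk, p, hp, rfl⟩ := mem_sup.1 (hP.sup_eq_top ▸ mem_top : w ∈ _ ⊔ P)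
    rw [dotProduct_add, hker k hk, hMx p hp, add_zero]
  exact disjoint_def.1 hP.disjoint x hMx0 hx

theorem mulVec_extend_val {R m n : Type*} [NonUnitalNonAssocSemiring R] [Fintype n]
    {S : Finset n} (A : Matrix m n R) (x : S → R) :
    A *ᵥ Function.extend Subtype.val x 0 = A.submatrix id Subtype.val *ᵥ x := by
  ext i
  calc ∑ j, A i j * Function.extend Subtype.val x 0 j
      = ∑ j ∈ S, A i j * Function.extend Subtype.val x 0 j := by
        refine (Finset.sum_subset (Finset.subset_univ S) fun j _ hj => ?_).symm
        rw [Function.extend_apply' _ _ _ fun ⟨a, ha⟩ => hj (ha ▸ a.2), Pi.zero_apply,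
          mul_zero]
    _ = ∑ j : S, A i j * x j := by
        rw [← Finset.sum_coe_sort S]
        simp only [Subtype.val_injective.extend_apply]

end Matrix

theorem stmt16_general {V : Type*} [Fintype V] [DecidableEq V]
    (G : SimpleGraph V) [DecidableRel G.Adj]
    (r : ℝ) (f : ℕ)
    (hf : f = Module.finrank ℝ
      (Module.End.eigenspace (Matrix.toLin' (G.adjMatrix ℝ)) r)) :
    ∃ S : Finset V, S.card = Fintype.card V - f ∧
      ¬ ∃ x : {v // v ∈ S} → ℝ, x ≠ 0 ∧
        ((G.adjMatrix ℝ).submatrix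
          (Subtype.val : {v // v ∈ S} → V) Subtype.val).mulVec x = r • x := by
  set A := G.adjMatrix ℝ
  set M := A - r • 1
  have hker : LinearMap.ker M.mulVecLin = Module.End.eigenspace (toLin' A) r := by
    ext v
    simp [M, sub_eq_zero]
  obtain ⟨S, hcompl, hcard⟩ :=
    (Pi.basisFun ℝ V).exists_finset_isCompl_span_image (LinearMap.ker M.mulVecLin)
  rw [hker, ← hf] at hcard
  refine ⟨S, by omega, ?_⟩
  rintro ⟨x, hx0, hx⟩
  set y := Function.extend Subtype.val x 0
  have hy_val : ∀ i : S, y i = x i := Subtype.val_injective.extend_apply x 0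
  have hy_mem : y ∈ span ℝ (Pi.basisFun ℝ V '' S) :=
    Pi.mem_span_basisFun_image_iff.2 fun i hi =>
      Function.extend_apply' _ _ _ fun ⟨a, ha⟩ => hi (ha ▸ a.2)
  have hMy : ∀ i : S, (M *ᵥ y) i = 0 := fun i => by
    rw [sub_mulVec, mulVec_extend_val, smul_mulVec, one_mulVec, Pi.sub_apply, Pi.smul_apply,
      hy_val]
    exact sub_eq_zero.2 (congrFun hx i)
  have hy : y = 0 :=
    (G.isSymm_adjMatrix.sub (isSymm_one.smul r)).eq_zero_of_mem_of_mulVec_dotProduct_eq_zero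
      hcompl hy_mem fun p hp => Finset.sum_eq_zero fun i _ => by
        by_cases hi : i ∈ S
        · rw [hMy ⟨i, hi⟩, zero_mul]
        · rw [Pi.mem_span_basisFun_image_iff.1 hp i hi, mul_zero]
  exact hx0 (funext fun i => by rw [← hy_val, hy, Pi.zero_apply, Pi.zero_apply])

/-- Star complement existence: if `r` is an eigenvalue of the adjacency matrix
of `G` with multiplicity `f`, then there is a set `S` of `n - f` vertices such
that `r` is not an eigenvalue of the adjacency matrix of the induced subgraph
on `S`. -/
theorem stmt16 {V : Type*} [Fintype V] [DecidableEq V]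
    (G : SimpleGraph V) [DecidableRel G.Adj]
    (r : ℝ) (f : ℕ)
    (hr : Module.End.HasEigenvalue (Matrix.toLin' (G.adjMatrix ℝ)) r)
    (hf : f = Module.finrank ℝ
      (Module.End.eigenspace (Matrix.toLin' (G.adjMatrix ℝ)) r)) :
    ∃ S : Finset V, S.card = Fintype.card V - f ∧
      ¬ ∃ x : {v // v ∈ S} → ℝ, x ≠ 0 ∧
        ((G.adjMatrix ℝ).submatrix
          (Subtype.val : {v // v ∈ S} → V) Subtype.val).mulVec x = r • x :=
  stmt16_general G r f hf
end

section
/- Let X be a (75,32,10,16) strongly regular graph in which every 4-clique extends to a 5-clique and every vertex outside a 5-clique has exactly 2 neighbors in it. Let K5 be a 5-clique and X_{i,j} the partition sets of the outside vertices as before. Then every edge within a set X_{i,j} lies in a triangle contained in X_{i,j}, and any vertex of X_{i,j} not on such a triangle T is adjacent to no vertex of T. -/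
open Finset

/-!
Adjacent vertices `x, y` of `X_{a,b}` form the 4-clique `{x, y, a, b}`, whose completion to a
5-clique adds a vertex `z` adjacent to `x, y, a, b`; `z` lies outside `K` because the only
neighbours of `x` in `K` are `a` and `b`, so by the two-neighbour property `z ∈ X_{a,b}` and
`{x, y, z}` is the triangle. Conversely a triangle `T ⊆ X_{a,b}` together with `a, b` is a
5-clique, so a vertex of `X_{a,b}` outside `T`, already adjacent to `a` and `b`, cannot be
adjacent to a vertex of `T`.
-/

namespace SimpleGraph

variable {V : Type*} {G : SimpleGraph V}

lemma IsClique.exists_adj_forall_of_subset {s t : Finset V} (ht : G.IsClique (t : Set V))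
    (hst : s ⊆ t) (hcard : #s < #t) : ∃ z ∉ s, ∀ w ∈ s, G.Adj z w := by
  obtain ⟨z, hzt, hzs⟩ := exists_mem_notMem_of_card_lt_card hcard
  exact ⟨z, hzs, fun w hw => ht hzt (hst hw) (ne_of_mem_of_not_mem hw hzs).symm⟩

variable [DecidableEq V]

lemma isNClique_pair {a b : V} (h : G.Adj a b) : G.IsNClique 2 {a, b} :=
  (isNClique_singleton.2 rfl).insert (by simpa using h)

variable [DecidableRel G.Adj]

lemma card_le_nbrs {C s : Finset V} {x : V} (hsC : s ⊆ C) (hadj : ∀ y ∈ s, G.Adj x y) :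
    #s ≤ nbrs G C x :=
  card_le_card fun y hy => mem_filter.2 ⟨hsC hy, hadj y hy⟩

variable [Fintype V]

variable (G) in
/-- The paper's `X_{a,b}`. -/
def pairPart (K : Finset V) (a b : V) : Finset V :=
  (univ \ K).filter (fun x => K.filter (fun y => G.Adj x y) = {a, b})

variable {K T : Finset V} {a b x y : V}

lemma notMem_of_mem_pairPart (hx : x ∈ G.pairPart K a b) : x ∉ K :=
  (mem_sdiff.1 (mem_filter.1 hx).1).2

lemma mem_filter_adj_of_mem_pairPart (hx : x ∈ G.pairPart K a b) (hy : y = a ∨ y = b) :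
    y ∈ K.filter (fun y => G.Adj x y) := by
  rw [(mem_filter.1 hx).2]
  simpa using hy

lemma adj_left_of_mem_pairPart (hx : x ∈ G.pairPart K a b) : G.Adj x a :=
  (mem_filter.1 (mem_filter_adj_of_mem_pairPart hx (.inl rfl))).2

lemma adj_right_of_mem_pairPart (hx : x ∈ G.pairPart K a b) : G.Adj x b :=
  (mem_filter.1 (mem_filter_adj_of_mem_pairPart hx (.inr rfl))).2

lemma eq_or_eq_of_mem_pairPart (hx : x ∈ G.pairPart K a b) (hy : y ∈ K) (hxy : G.Adj x y) :
    y = a ∨ y = b := by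
  have : y ∈ K.filter (fun y => G.Adj x y) := mem_filter.2 ⟨hy, hxy⟩
  rwa [(mem_filter.1 hx).2, mem_insert, mem_singleton] at this

lemma mem_pairPart_of_nbrs_le_two (ha : a ∈ K) (hb : b ∈ K) (hab : a ≠ b) (hxK : x ∉ K)
    (hxa : G.Adj x a) (hxb : G.Adj x b) (hx : nbrs G K x ≤ 2) : x ∈ G.pairPart K a b := by
  have hsub : ({a, b} : Finset V) ⊆ K.filter (fun y => G.Adj x y) := by
    simp [insert_subset_iff, ha, hb, hxa, hxb]
  refine mem_filter.2 ⟨mem_sdiff.2 ⟨mem_univ x, hxK⟩, ?_⟩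
  exact (eq_of_subset_of_card_le hsub (by rwa [card_pair hab])).symm

lemma IsNClique.insert_insert_of_subset_pairPart {n : ℕ} (hab : G.Adj a b)
    (hTX : T ⊆ G.pairPart K a b) (hT : G.IsNClique n T) :
    G.IsNClique (n + 2) (insert a (insert b T)) := by
  refine (hT.insert fun t ht => (adj_right_of_mem_pairPart (hTX ht)).symm).insert ?_
  intro w hw
  rcases mem_insert.1 hw with rfl | hw
  · exact hab
  · exact (adj_left_of_mem_pairPart (hTX hw)).symm

lemma exists_triangle_of_adj_of_mem_pairPart
    (h4 : ∀ s : Finset V, G.IsNClique 4 s → ∃ t, G.IsNClique 5 t ∧ s ⊆ t)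
    (hK : ∀ z ∉ K, nbrs G K z ≤ 2) (ha : a ∈ K) (hb : b ∈ K) (hab : G.Adj a b)
    (hx : x ∈ G.pairPart K a b) (hy : y ∈ G.pairPart K a b) (hxy : G.Adj x y) :
    ∃ T ⊆ G.pairPart K a b, G.IsNClique 3 T ∧ x ∈ T ∧ y ∈ T := by
  have hs : G.IsNClique 4 {x, y, a, b} :=
    ((isNClique_pair hab).insert (by
      simp [adj_left_of_mem_pairPart hy, adj_right_of_mem_pairPart hy])).insert (by
      simp [hxy, adj_left_of_mem_pairPart hx, adj_right_of_mem_pairPart hx])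
  obtain ⟨t, ht, hst⟩ := h4 _ hs
  obtain ⟨z, hz, hzs⟩ :=
    ht.isClique.exists_adj_forall_of_subset hst (by rw [hs.card_eq, ht.card_eq]; norm_num)
  have hzK : z ∉ K := fun hzK => by
    rcases eq_or_eq_of_mem_pairPart hx hzK (hzs x (by simp)).symm with rfl | rfl <;> simp at hz
  have hzX : z ∈ G.pairPart K a b :=
    mem_pairPart_of_nbrs_le_two ha hb hab.ne hzK (hzs a (by simp)) (hzs b (by simp)) (hK z hzK)
  refine ⟨{x, y, z}, by simp [insert_subset_iff, hx, hy, hzX], ?_, by simp, by simp⟩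
  exact is3Clique_triple_iff.2 ⟨hxy, (hzs x (by simp)).symm, (hzs y (by simp)).symm⟩

lemma not_adj_of_mem_pairPart_of_isNClique
    (h5 : ∀ C : Finset V, G.IsNClique 5 C → ∀ x ∉ C, nbrs G C x ≤ 2)
    (ha : a ∈ K) (hb : b ∈ K) (hab : G.Adj a b) (hTX : T ⊆ G.pairPart K a b)
    (hT : G.IsNClique 3 T) {v t : V} (hv : v ∈ G.pairPart K a b) (hvT : v ∉ T) (ht : t ∈ T) :
    ¬ G.Adj v t := by
  intro hvt
  have hvK := notMem_of_mem_pairPart hv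
  have hvC : v ∉ insert a (insert b T) := by
    simp only [mem_insert, not_or]
    exact ⟨fun h => hvK (h ▸ ha), fun h => hvK (h ▸ hb), hvT⟩
  have hta := adj_left_of_mem_pairPart (hTX ht)
  have htb := adj_right_of_mem_pairPart (hTX ht)
  have habt : G.IsNClique 3 {a, b, t} := is3Clique_triple_iff.2 ⟨hab, hta.symm, htb.symm⟩
  have h3 : 3 ≤ nbrs G (insert a (insert b T)) v := by
    rw [← habt.card_eq]
    refine card_le_nbrs (by simp [insert_subset_iff, ht]) ?_
    simp [adj_left_of_mem_pairPart hv, adj_right_of_mem_pairPart hv, hvt]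
  have h2 := h5 _ (hT.insert_insert_of_subset_pairPart hab hTX) v hvC
  omega

end SimpleGraph

open SimpleGraph in
theorem stmt17_general {V : Type*} [Fintype V] [DecidableEq V]
    (G : SimpleGraph V) [DecidableRel G.Adj]
    (h4 : ∀ s : Finset V, G.IsNClique 4 s → ∃ t, G.IsNClique 5 t ∧ s ⊆ t)
    (h5 : ∀ C : Finset V, G.IsNClique 5 C → ∀ x ∉ C, nbrs G C x = 2)
    (K : Finset V) (hK : G.IsNClique 5 K)
    (a b : V) (ha : a ∈ K) (hb : b ∈ K) (hab : a ≠ b)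
    (S : Finset V)
    (hS : S = (univ \ K).filter (fun x => K.filter (fun y => G.Adj x y) = {a, b})) :
    (∀ x ∈ S, ∀ y ∈ S, G.Adj x y →
      ∃ T : Finset V, T ⊆ S ∧ G.IsNClique 3 T ∧ x ∈ T ∧ y ∈ T) ∧
    (∀ T : Finset V, T ⊆ S → G.IsNClique 3 T →
      ∀ v ∈ S, v ∉ T → ∀ t ∈ T, ¬ G.Adj v t) := by
  change S = G.pairPart K a b at hS
  subst hS
  have hle : ∀ C : Finset V, G.IsNClique 5 C → ∀ x ∉ C, nbrs G C x ≤ 2 :=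
    fun C hC x hx => (h5 C hC x hx).le
  have hadj : G.Adj a b := hK.isClique ha hb hab
  exact ⟨fun x hx y hy hxy =>
      exists_triangle_of_adj_of_mem_pairPart h4 (hle K hK) ha hb hadj hx hy hxy,
    fun T hTX hT v hv hvT t ht =>
      not_adj_of_mem_pairPart_of_isNClique hle ha hb hadj hTX hT hv hvT ht⟩

/-- For a 5-clique `K` in a (75,32,10,16) SRG with the stated clique properties,
every edge inside a part `X_{a,b}` lies in a triangle contained in the part, and
a vertex of the part not on such a triangle has no neighbor on it. -/
theorem stmt17 {V : Type*} [Fintype V] [DecidableEq V]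
    (G : SimpleGraph V) [DecidableRel G.Adj]
    (hG : G.IsSRGWith 75 32 10 16)
    (h4 : ∀ s : Finset V, G.IsNClique 4 s → ∃ t, G.IsNClique 5 t ∧ s ⊆ t)
    (h5 : ∀ C : Finset V, G.IsNClique 5 C → ∀ x ∉ C, nbrs G C x = 2)
    (K : Finset V) (hK : G.IsNClique 5 K)
    (a b : V) (ha : a ∈ K) (hb : b ∈ K) (hab : a ≠ b)
    (S : Finset V)
    (hS : S = (univ \ K).filter (fun x => K.filter (fun y => G.Adj x y) = {a, b})) :
    (∀ x ∈ S, ∀ y ∈ S, G.Adj x y →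
      ∃ T : Finset V, T ⊆ S ∧ G.IsNClique 3 T ∧ x ∈ T ∧ y ∈ T) ∧
    (∀ T : Finset V, T ⊆ S → G.IsNClique 3 T →
      ∀ v ∈ S, v ∉ T → ∀ t ∈ T, ¬ G.Adj v t) :=
  stmt17_general G h4 h5 K hK a b ha hb hab S hS
end

section
/- In a (75,32,10,16) strongly regular graph, if K is a 4-clique not contained in any 5-clique, and b_i denotes the number of vertices outside K with exactly i neighbors in K (so b_4 = 0), then (b_0,b_1,b_2,b_3) is one of (3,20,48,0), (0,29,39,3), (1,26,42,2), (2,23,45,1). -/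
open Finset

lemma Finset.card_filter_sdiff {α : Type*} [DecidableEq α] {s t : Finset α} (h : t ⊆ s)
    (p : α → Prop) [DecidablePred p] :
    #((s \ t).filter p) = #(s.filter p) - #(t.filter p) := by
  have hfilter : (s \ t).filter p = s.filter p \ t.filter p := by
    ext; simp only [mem_filter, mem_sdiff]; tauto
  rw [hfilter, card_sdiff_of_subset (filter_subset_filter p h)]

namespace SimpleGraph

variable {V : Type*} [DecidableEq V] {G : SimpleGraph V} [DecidableRel G.Adj]
  {K : Finset V}

lemma nbrs_le_card (x : V) : nbrs G K x ≤ #K := card_filter_le _ _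

lemma sum_comp_nbrs_eq_sum_bcount [Fintype V] (f : ℕ → ℕ) :
    ∑ x ∈ univ \ K, f (nbrs G K x) = ∑ i ∈ range (#K + 1), f i * bcount G K i := by
  rw [← sum_fiberwise_of_maps_to (fun x _ => mem_range_succ_iff.2 (nbrs_le_card (G := G) x))]
  refine sum_congr rfl fun i _ => ?_
  rw [sum_congr rfl fun x hx => congrArg f (mem_filter.1 hx).2, sum_const, smul_eq_mul,
    mul_comm, bcount]

lemma bcount_eq_zero_of_maximal [Fintype V] {n : ℕ} (hK : G.IsNClique n K)
    (hmax : ¬ ∃ t : Finset V, G.IsNClique (n + 1) t ∧ K ⊆ t) : bcount G K n = 0 := by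
  rw [bcount, card_eq_zero, filter_eq_empty_iff]
  intro x _ hx
  have hfull : K.filter (fun y => G.Adj x y) = K :=
    eq_of_subset_of_card_le (filter_subset _ _) (by rw [hK.2]; exact hx.ge)
  have hadj : ∀ y ∈ K, G.Adj x y := fun y hy => (mem_filter.1 (hfull ▸ hy)).2
  exact hmax ⟨insert x K, hK.insert hadj, subset_insert x K⟩

lemma IsClique.filter_adj_eq_erase (hK : G.IsClique (K : Set V)) {y : V} (hy : y ∈ K) :
    K.filter (fun x => G.Adj x y) = K.erase y := by
  ext x
  simp only [mem_filter, mem_erase]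
  exact ⟨fun ⟨hx, hxy⟩ => ⟨hxy.ne, hx⟩, fun ⟨hne, hx⟩ => ⟨hx, hK hx hy hne⟩⟩

lemma IsClique.filter_adj_adj_eq_erase_erase (hK : G.IsClique (K : Set V)) {y z : V}
    (hy : y ∈ K) (hz : z ∈ K) :
    K.filter (fun x => G.Adj x y ∧ G.Adj x z) = (K.erase y).erase z := by
  ext x
  simp only [mem_filter, mem_erase]
  refine ⟨fun ⟨hx, hxy, hxz⟩ => ⟨hxz.ne, hxy.ne, hx⟩, fun ⟨hnz, hny, hx⟩ => ?_⟩
  exact ⟨hx, hK hx hy hny, hK hx hz hnz⟩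

lemma card_filter_adj_sdiff_of_isClique [Fintype V] {k : ℕ} (hk : G.IsRegularOfDegree k)
    (hK : G.IsClique (K : Set V)) {y : V} (hy : y ∈ K) :
    #((univ \ K).filter (fun x => G.Adj x y)) = k - (#K - 1) := by
  have hdeg : #(univ.filter (fun x => G.Adj x y)) = k := by
    rw [← hk y, degree, neighborFinset_eq_filter]
    simp only [adj_comm]
  rw [card_filter_sdiff (subset_univ K), hdeg, hK.filter_adj_eq_erase hy, card_erase_of_mem hy]

lemma IsSRGWith.card_filter_adj_adj_sdiff_of_isClique [Fintype V] {n k ℓ μ : ℕ}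
    (hG : G.IsSRGWith n k ℓ μ) (hK : G.IsClique (K : Set V)) {y z : V} (hy : y ∈ K)
    (hz : z ∈ K) (hyz : y ≠ z) :
    #((univ \ K).filter (fun x => G.Adj x y ∧ G.Adj x z)) = ℓ - (#K - 2) := by
  have hcommon : #(univ.filter (fun x => G.Adj x y ∧ G.Adj x z)) = ℓ := by
    rw [← hG.of_adj y z (hK hy hz hyz), ← Set.toFinset_card]
    congr 1
    ext x
    simp [mem_commonNeighbors, adj_comm]
  rw [card_filter_sdiff (subset_univ K), hcommon, hK.filter_adj_adj_eq_erase_erase hy hz,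
    card_erase_of_mem (mem_erase.2 ⟨hyz.symm, hz⟩), card_erase_of_mem hy, Nat.sub_sub]

lemma sum_nbrs_sdiff_of_isClique [Fintype V] {k : ℕ} (hk : G.IsRegularOfDegree k)
    (hK : G.IsClique (K : Set V)) :
    ∑ x ∈ univ \ K, nbrs G K x = #K * (k - (#K - 1)) :=
  calc ∑ x ∈ univ \ K, nbrs G K x
      = ∑ y ∈ K, #((univ \ K).filter (fun x => G.Adj x y)) :=
        sum_card_bipartiteAbove_eq_sum_card_bipartiteBelow _
    _ = ∑ _y ∈ K, (k - (#K - 1)) :=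
        sum_congr rfl fun _ hy => card_filter_adj_sdiff_of_isClique hk hK hy
    _ = #K * (k - (#K - 1)) := by rw [sum_const, smul_eq_mul]

lemma nbrs_mul_nbrs_sub_nbrs_eq_card_filter_offDiag (x : V) :
    nbrs G K x * nbrs G K x - nbrs G K x =
      #(K.offDiag.filter (fun p => G.Adj x p.1 ∧ G.Adj x p.2)) := by
  rw [nbrs, ← offDiag_card]
  congr 1
  ext p
  simp only [mem_offDiag, mem_filter]
  tauto

lemma IsSRGWith.sum_nbrs_mul_nbrs_sub_nbrs_sdiff_of_isClique [Fintype V] {n k ℓ μ : ℕ}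
    (hG : G.IsSRGWith n k ℓ μ) (hK : G.IsClique (K : Set V)) :
    ∑ x ∈ univ \ K, (nbrs G K x * nbrs G K x - nbrs G K x) =
      (#K * #K - #K) * (ℓ - (#K - 2)) :=
  calc ∑ x ∈ univ \ K, (nbrs G K x * nbrs G K x - nbrs G K x)
      = ∑ x ∈ univ \ K, #(K.offDiag.filter (fun p => G.Adj x p.1 ∧ G.Adj x p.2)) :=
        sum_congr rfl fun x _ => nbrs_mul_nbrs_sub_nbrs_eq_card_filter_offDiag x
    _ = ∑ p ∈ K.offDiag, #((univ \ K).filter (fun x => G.Adj x p.1 ∧ G.Adj x p.2)) :=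
        sum_card_bipartiteAbove_eq_sum_card_bipartiteBelow _
    _ = ∑ _p ∈ K.offDiag, (ℓ - (#K - 2)) := sum_congr rfl fun p hp => by
        obtain ⟨hy, hz, hyz⟩ := mem_offDiag.1 hp
        exact hG.card_filter_adj_adj_sdiff_of_isClique hK hy hz hyz
    _ = (#K * #K - #K) * (ℓ - (#K - 2)) := by rw [sum_const, smul_eq_mul, offDiag_card]

end SimpleGraph

open SimpleGraph in
/-- If `K` is a 4-clique of a (75,32,10,16) SRG not contained in any 5-clique,
then `b₄ = 0` and `(b₀,b₁,b₂,b₃)` is one of `(3,20,48,0)`, `(0,29,39,3)`,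
`(1,26,42,2)`, `(2,23,45,1)`. -/
theorem stmt18 {V : Type*} [Fintype V] [DecidableEq V]
    (G : SimpleGraph V) [DecidableRel G.Adj]
    (hG : G.IsSRGWith 75 32 10 16)
    (K : Finset V) (hK : G.IsNClique 4 K)
    (hno5 : ¬ ∃ t : Finset V, G.IsNClique 5 t ∧ K ⊆ t) :
    bcount G K 4 = 0 ∧
    ((bcount G K 0, bcount G K 1, bcount G K 2, bcount G K 3) = (3, 20, 48, 0) ∨
     (bcount G K 0, bcount G K 1, bcount G K 2, bcount G K 3) = (0, 29, 39, 3) ∨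
     (bcount G K 0, bcount G K 1, bcount G K 2, bcount G K 3) = (1, 26, 42, 2) ∨
     (bcount G K 0, bcount G K 1, bcount G K 2, bcount G K 3) = (2, 23, 45, 1)) := by
  have hb4 : bcount G K 4 = 0 := bcount_eq_zero_of_maximal hK hno5
  have hcount := sum_comp_nbrs_eq_sum_bcount (G := G) (K := K) fun _ => 1
  have hlinear := sum_comp_nbrs_eq_sum_bcount (G := G) (K := K) fun i => i
  have hquad := sum_comp_nbrs_eq_sum_bcount (G := G) (K := K) fun i => i * i - i
  rw [← card_eq_sum_ones, card_sdiff_of_subset (subset_univ K), card_univ, hG.card] at hcount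
  rw [sum_nbrs_sdiff_of_isClique hG.regular hK.1] at hlinear
  rw [hG.sum_nbrs_mul_nbrs_sub_nbrs_sdiff_of_isClique hK.1] at hquad
  simp only [hK.2, sum_range_succ, sum_range_zero] at hcount hlinear hquad
  simp only [Prod.mk.injEq]
  omega
end
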